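/- arXiv:2305.14185 — 11 statements merged into one kernel-verified Lean document; each statement's English description precedes it below -/
import Mathlib

section
/- Let s, r, x : ℝ → ℝ be differentiable functions satisfying the Lipsitch ODE system at every time t ≥ 0, with s(t)+r(t)+x(t) ≠ 0 for all t ≥ 0. If s(0)+r(0)+x(0) = 1, then s(t)+r(t)+x(t) = 1 for all t ≥ 0. -/
/-- If differentiable functions `s, r, x : ℝ → ℝ` satisfy the Lipsitch
ODE system at every time `t ≥ 0` (with `s t + r t + x t ≠ 0` there), and
`s 0 + r 0 + x 0 = 1`, then `s t + r t + x t = 1` for all `t ≥ 0`. -/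
theorem sum_eq_one_of_initial
    (β μ γ τ1 τ2 m c : ℝ)
    (hβ : 0 < β) (hμ : 0 < μ) (hγ : 0 < γ) (hτ1 : 0 < τ1) (hτ2 : 0 < τ2)
    (hm : m ∈ Set.Ioo (0:ℝ) 1) (hc : c ∈ Set.Ioo (0:ℝ) 1)
    (s r x : ℝ → ℝ)
    (hs : Differentiable ℝ s) (hr : Differentiable ℝ r) (hx : Differentiable ℝ x)
    (hne : ∀ t : ℝ, 0 ≤ t → s t + r t + x t ≠ 0)
    (hsys : ∀ t : ℝ, 0 ≤ t →
      deriv s t = m * μ + β * s t * x t / (s t + r t + x t) - (γ + τ1 + τ2 + μ) * s t ∧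
      deriv r t = (1 - c) * β * r t * x t / (s t + r t + x t) - (γ + τ2 + μ) * r t ∧
      deriv x t = (1 - m) * μ + (γ + τ1 + τ2) * s t + (γ + τ2) * r t
        - β * s t * x t / (s t + r t + x t)
        - (1 - c) * β * r t * x t / (s t + r t + x t) - μ * x t)
    (hinit : s 0 + r 0 + x 0 = 1) :
    ∀ t : ℝ, 0 ≤ t → s t + r t + x t = 1 := by
  intro t ht
  set N : ℝ → ℝ := fun u => s u + r u + x u with hN
  set g : ℝ → ℝ := fun u => (N u - 1) * Real.exp (μ * u) with hg
  have hNd : Differentiable ℝ N := (hs.add hr).add hx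
  have key : ∀ u ∈ Set.Ico (0:ℝ) t, HasDerivWithinAt g 0 (Set.Ici u) u := by
    intro u hu
    obtain ⟨h1, h2, h3⟩ := hsys u hu.1
    have hD : HasDerivAt N (deriv s u + deriv r u + deriv x u) u :=
      (((hs u).hasDerivAt.add (hr u).hasDerivAt).add (hx u).hasDerivAt)
    have hval : deriv s u + deriv r u + deriv x u = μ - μ * N u := by
      rw [h1, h2, h3]; simp only [hN]; ring
    rw [hval] at hD
    have hE : HasDerivAt (fun u : ℝ => Real.exp (μ * u)) (μ * Real.exp (μ * u)) u := by
      have h := (Real.hasDerivAt_exp (μ * u)).comp u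
        ((hasDerivAt_id u).const_mul μ)
      simp only [Function.comp_def, id_eq, mul_one] at h
      rw [mul_comm μ (Real.exp (μ * u))]
      exact h
    have hG : HasDerivAt g ((μ - μ * N u) * Real.exp (μ * u)
        + (N u - 1) * (μ * Real.exp (μ * u))) u := (hD.sub_const 1).mul hE
    have : (μ - μ * N u) * Real.exp (μ * u) + (N u - 1) * (μ * Real.exp (μ * u)) = 0 := by
      ring
    rw [this] at hG
    exact hG.hasDerivWithinAt
  have hcont : ContinuousOn g (Set.Icc 0 t) := by
    apply Continuous.continuousOn
    exact (hNd.continuous.sub continuous_const).mul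
      ((Real.continuous_exp.comp (continuous_const.mul continuous_id)))
  have hconst := constant_of_has_deriv_right_zero hcont key t (Set.right_mem_Icc.mpr ht)
  have hg0 : g 0 = 0 := by simp [hg, hN, hinit]
  rw [hg0] at hconst
  have hexp : Real.exp (μ * t) ≠ 0 := Real.exp_ne_zero _
  have : N t - 1 = 0 := by
    have := mul_eq_zero.mp hconst
    tauto
  have : N t = 1 := by linarith
  simpa [hN] using this
end

section
/- Let s, r, x : ℝ → ℝ be differentiable functions satisfying the Lipsitch ODE system at every t, and suppose s(t)+r(t)+x(t) = 1 for all t. Then the functions z := s + r and r satisfy the reduced system: z'(t) = mμ + β(z(t)−c·r(t))(1−z(t)) − (γ+τ1+τ2+μ)z(t) + τ1·r(t) and r'(t) = r(t)((1−c)β(1−z(t)) − (γ+τ2+μ)) for all t. -/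
/-- If differentiable `s, r, x : ℝ → ℝ` satisfy the Lipsitch ODE system
at every time and `s t + r t + x t = 1` for all `t`, then `z := s + r` and `r` satisfy the
reduced system
`z' = mμ + β(z − c r)(1 − z) − (γ+τ1+τ2+μ) z + τ1 r` and
`r' = r((1−c)β(1−z) − (γ+τ2+μ))`. -/
theorem reduced_system_of_lipsitch
    (β μ γ τ1 τ2 m c : ℝ)
    (hβ : 0 < β) (hμ : 0 < μ) (hγ : 0 < γ) (hτ1 : 0 < τ1) (hτ2 : 0 < τ2)
    (hm : m ∈ Set.Ioo (0:ℝ) 1) (hc : c ∈ Set.Ioo (0:ℝ) 1)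
    (s r x : ℝ → ℝ)
    (hs : Differentiable ℝ s) (hr : Differentiable ℝ r) (hx : Differentiable ℝ x)
    (hsys : ∀ t : ℝ,
      deriv s t = m * μ + β * s t * x t / (s t + r t + x t) - (γ + τ1 + τ2 + μ) * s t ∧
      deriv r t = (1 - c) * β * r t * x t / (s t + r t + x t) - (γ + τ2 + μ) * r t ∧
      deriv x t = (1 - m) * μ + (γ + τ1 + τ2) * s t + (γ + τ2) * r t
        - β * s t * x t / (s t + r t + x t)
        - (1 - c) * β * r t * x t / (s t + r t + x t) - μ * x t)
    (hsum : ∀ t : ℝ, s t + r t + x t = 1) :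
    ∀ t : ℝ,
      deriv (fun u => s u + r u) t
        = m * μ + β * ((s t + r t) - c * r t) * (1 - (s t + r t))
          - (γ + τ1 + τ2 + μ) * (s t + r t) + τ1 * r t ∧
      deriv r t = r t * ((1 - c) * β * (1 - (s t + r t)) - (γ + τ2 + μ)) := by
  intro t
  obtain ⟨h1, h2, _⟩ := hsys t
  have hx1 : x t = 1 - (s t + r t) := by have := hsum t; linarith
  constructor
  · rw [deriv_fun_add (hs t) (hr t), h1, h2, hsum t, hx1]
    ring
  · rw [h2, hsum t, hx1]; ring
end

section
/- Let z, r : ℝ → ℝ be differentiable functions satisfying, for all t, the reduced system z' = mμ + β(z−cr)(1−z) − (γ+τ1+τ2+μ)z + τ1 r and r' = r((1−c)β(1−z) − (γ+τ2+μ)). Define s := z − r and x := 1 − z. Then s(t)+r(t)+x(t) = 1 for all t, and (s, r, x) satisfies the Lipsitch ODE system at every t. -/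
theorem lipsitch_of_reduced_system_general
    (β μ γ τ1 τ2 m c : ℝ)
    (z r : ℝ → ℝ)
    (hz : Differentiable ℝ z) (hr : Differentiable ℝ r)
    (hzsys : ∀ t : ℝ,
      deriv z t = m * μ + β * (z t - c * r t) * (1 - z t) - (γ + τ1 + τ2 + μ) * z t
        + τ1 * r t)
    (hrsys : ∀ t : ℝ,
      deriv r t = r t * ((1 - c) * β * (1 - z t) - (γ + τ2 + μ))) :
    ∀ t : ℝ,
      (fun u => z u - r u) t + r t + (fun u => 1 - z u) t = 1 ∧
      deriv (fun u => z u - r u) t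
        = m * μ + β * ((fun u => z u - r u) t) * ((fun u => 1 - z u) t)
            / ((fun u => z u - r u) t + r t + (fun u => 1 - z u) t)
          - (γ + τ1 + τ2 + μ) * ((fun u => z u - r u) t) ∧
      deriv r t
        = (1 - c) * β * r t * ((fun u => 1 - z u) t)
            / ((fun u => z u - r u) t + r t + (fun u => 1 - z u) t)
          - (γ + τ2 + μ) * r t ∧
      deriv (fun u => 1 - z u) t
        = (1 - m) * μ + (γ + τ1 + τ2) * ((fun u => z u - r u) t) + (γ + τ2) * r t
          - β * ((fun u => z u - r u) t) * ((fun u => 1 - z u) t)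
            / ((fun u => z u - r u) t + r t + (fun u => 1 - z u) t)
          - (1 - c) * β * r t * ((fun u => 1 - z u) t)
            / ((fun u => z u - r u) t + r t + (fun u => 1 - z u) t)
          - μ * ((fun u => 1 - z u) t) := by
  intro t
  have hsum : (fun u => z u - r u) t + r t + (fun u => 1 - z u) t = 1 := by ring
  have hds : deriv (fun u => z u - r u) t = deriv z t - deriv r t := deriv_sub (hz t) (hr t)
  refine ⟨hsum, ?_, ?_, ?_⟩
  · rw [hsum, div_one, hds, hzsys, hrsys]; ring
  · rw [hsum, div_one, hrsys]; ring
  · rw [hsum, div_one, div_one, deriv_const_sub, hzsys]; ring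

/-- If differentiable `z, r : ℝ → ℝ` satisfy the reduced system
`z' = mμ + β(z − c r)(1 − z) − (γ+τ1+τ2+μ) z + τ1 r` and
`r' = r((1−c)β(1−z) − (γ+τ2+μ))` for all `t`, then setting `s := z − r` and `x := 1 − z`,
one has `s + r + x = 1` everywhere and `(s, r, x)` satisfies the Lipsitch ODE system at
every time. -/
theorem lipsitch_of_reduced_system
    (β μ γ τ1 τ2 m c : ℝ)
    (hβ : 0 < β) (hμ : 0 < μ) (hγ : 0 < γ) (hτ1 : 0 < τ1) (hτ2 : 0 < τ2)
    (hm : m ∈ Set.Ioo (0:ℝ) 1) (hc : c ∈ Set.Ioo (0:ℝ) 1)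
    (z r : ℝ → ℝ)
    (hz : Differentiable ℝ z) (hr : Differentiable ℝ r)
    (hzsys : ∀ t : ℝ,
      deriv z t = m * μ + β * (z t - c * r t) * (1 - z t) - (γ + τ1 + τ2 + μ) * z t
        + τ1 * r t)
    (hrsys : ∀ t : ℝ,
      deriv r t = r t * ((1 - c) * β * (1 - z t) - (γ + τ2 + μ))) :
    ∀ t : ℝ,
      (fun u => z u - r u) t + r t + (fun u => 1 - z u) t = 1 ∧
      deriv (fun u => z u - r u) t
        = m * μ + β * ((fun u => z u - r u) t) * ((fun u => 1 - z u) t)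
            / ((fun u => z u - r u) t + r t + (fun u => 1 - z u) t)
          - (γ + τ1 + τ2 + μ) * ((fun u => z u - r u) t) ∧
      deriv r t
        = (1 - c) * β * r t * ((fun u => 1 - z u) t)
            / ((fun u => z u - r u) t + r t + (fun u => 1 - z u) t)
          - (γ + τ2 + μ) * r t ∧
      deriv (fun u => 1 - z u) t
        = (1 - m) * μ + (γ + τ1 + τ2) * ((fun u => z u - r u) t) + (γ + τ2) * r t
          - β * ((fun u => z u - r u) t) * ((fun u => 1 - z u) t)
            / ((fun u => z u - r u) t + r t + (fun u => 1 - z u) t)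
          - (1 - c) * β * r t * ((fun u => 1 - z u) t)
            / ((fun u => z u - r u) t + r t + (fun u => 1 - z u) t)
          - μ * ((fun u => 1 - z u) t) :=
  lipsitch_of_reduced_system_general β μ γ τ1 τ2 m c z r hz hr hzsys hrsys
end

section
/- Let φ : ℝ² → ℝ be continuously differentiable. For each N ∈ ℕ, N ≥ 1, and integers 0 ≤ j ≤ i ≤ N define (A_N φ)(i,j) = (N−i)((i−j)β/N + mμ)·(φ((i+1)/N, j/N) − φ(i/N, j/N)) + (N−i)j(1−c)(β/N)·(φ((i+1)/N, (j+1)/N) − φ(i/N, j/N)) + jmμ·(φ(i/N, (j−1)/N) − φ(i/N, j/N)) + j(γ+τ2+(1−m)μ)·(φ((i−1)/N, (j−1)/N) − φ(i/N, j/N)) + (i−j)(γ+τ1+τ2+(1−m)μ)·(φ((i−1)/N, j/N) − φ(i/N, j/N)). Let (z, r) ∈ ℝ² with 0 ≤ r ≤ z ≤ 1, and let (i_N), (j_N) be sequences of integers with 0 ≤ j_N ≤ i_N ≤ N, i_N/N → z and j_N/N → r. Then (A_N φ)(i_N, j_N) converges, as N → ∞, to F_z(z,r)·∂₁φ(z,r)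 + F_r(z,r)·∂₂φ(z,r), where F_z(z,r) = mμ + β(z−cr)(1−z) − (γ+τ1+τ2+μ)z + τ1 r and F_r(z,r) = r((1−c)β(1−z) − (γ+τ2+μ)). -/
open Filter

/-- The generator `A_N` of the Markov chain (with per capita infection rate `β/N`)
applied to the test function `φ` at the rescaled state `(i/N, j/N)`. -/
noncomputable def generatorApply (β μ γ τ1 τ2 m c : ℝ) (φ : ℝ × ℝ → ℝ) (N i j : ℕ) : ℝ :=
  ((N : ℝ) - i) * (((i : ℝ) - j) * β / N + m * μ)
      * (φ (((i : ℝ) + 1) / N, (j : ℝ) / N) - φ ((i : ℝ) / N, (j : ℝ) / N))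
    + ((N : ℝ) - i) * j * (1 - c) * (β / N)
      * (φ (((i : ℝ) + 1) / N, ((j : ℝ) + 1) / N) - φ ((i : ℝ) / N, (j : ℝ) / N))
    + (j : ℝ) * m * μ
      * (φ ((i : ℝ) / N, ((j : ℝ) - 1) / N) - φ ((i : ℝ) / N, (j : ℝ) / N))
    + (j : ℝ) * (γ + τ2 + (1 - m) * μ)
      * (φ (((i : ℝ) - 1) / N, ((j : ℝ) - 1) / N) - φ ((i : ℝ) / N, (j : ℝ) / N))
    + ((i : ℝ) - j) * (γ + τ1 + τ2 + (1 - m) * μ)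
      * (φ (((i : ℝ) - 1) / N, (j : ℝ) / N) - φ ((i : ℝ) / N, (j : ℝ) / N))

/-- Difference quotients along a converging sequence tend to the directional derivative. -/
lemma key_deriv (φ : ℝ × ℝ → ℝ) (hφ : ContDiff ℝ 1 φ) (x₀ v : ℝ × ℝ)
    (x : ℕ → ℝ × ℝ) (hx : Tendsto x atTop (nhds x₀)) :
    Tendsto (fun n : ℕ => (n : ℝ) * (φ (x n + (n : ℝ)⁻¹ • v) - φ (x n))) atTop
      (nhds (fderiv ℝ φ x₀ v)) := by
  have hdiff : Differentiable ℝ φ := hφ.differentiable one_ne_zero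
  have hcont : Continuous fun u => fderiv ℝ φ u := hφ.continuous_fderiv one_ne_zero
  set D := fderiv ℝ φ x₀ with hD
  set g : ℝ × ℝ → ℝ := fun u => φ u - D u with hg
  rw [Metric.tendsto_atTop]
  intro ε hε
  have hv1 : (0:ℝ) < ‖v‖ + 1 := by positivity
  set ε' := ε / (‖v‖ + 1) with hε'def
  have hε' : 0 < ε' := div_pos hε hv1
  obtain ⟨δ, hδ, hδball⟩ := Metric.continuousAt_iff.mp hcont.continuousAt ε' hε'
  have h1 : ∀ᶠ n : ℕ in atTop, x n ∈ Metric.ball x₀ (δ/2) :=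
    hx (Metric.ball_mem_nhds x₀ (half_pos hδ))
  have h2 : ∀ᶠ n : ℕ in atTop, (n:ℝ)⁻¹ * ‖v‖ < δ/2 := by
    have : Tendsto (fun n : ℕ => (n:ℝ)⁻¹ * ‖v‖) atTop (nhds (0 * ‖v‖)) :=
      tendsto_inv_atTop_nhds_zero_nat.mul_const ‖v‖
    rw [zero_mul] at this
    exact this.eventually_lt_const (half_pos hδ)
  obtain ⟨N₀, hN₀⟩ := ((h1.and h2).and (eventually_ge_atTop 1)).exists_forall_of_atTop
  refine ⟨N₀, fun n hn => ?_⟩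
  obtain ⟨⟨hn1, hn2⟩, hn3⟩ := hN₀ n hn
  have hne : (n:ℝ) ≠ 0 := Nat.cast_ne_zero.mpr (by omega)
  have hnpos : (0:ℝ) < n := by positivity
  set y := x n + (n:ℝ)⁻¹ • v with hy
  have hyx : y - x n = (n:ℝ)⁻¹ • v := by simp [hy]
  have hnv : ‖y - x n‖ = (n:ℝ)⁻¹ * ‖v‖ := by
    rw [hyx, norm_smul]; simp [abs_of_nonneg (inv_nonneg.mpr hnpos.le)]
  have hmem1 : x n ∈ Metric.ball x₀ δ :=
    Metric.mem_ball.mpr (lt_of_lt_of_le (Metric.mem_ball.mp hn1) (by linarith))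
  have hmem2 : y ∈ Metric.ball x₀ δ := by
    rw [Metric.mem_ball]
    calc dist y x₀ ≤ dist y (x n) + dist (x n) x₀ := dist_triangle _ _ _
      _ < δ/2 + δ/2 := by
          refine add_lt_add (lt_of_le_of_lt ?_ hn2) (Metric.mem_ball.mp hn1)
          rw [dist_eq_norm, hnv]
      _ = δ := by ring
  have hmvt : ‖g y - g (x n)‖ ≤ ε' * ‖y - x n‖ := by
    refine (convex_ball x₀ δ).norm_image_sub_le_of_norm_hasFDerivWithin_le
      (f' := fun u => fderiv ℝ φ u - D)
      (fun u _ => (((hdiff u).hasFDerivAt).sub (D.hasFDerivAt)).hasFDerivWithinAt)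
      (fun u hu => ?_) hmem1 hmem2
    have := hδball (Metric.mem_ball.mp hu)
    rw [dist_eq_norm] at this
    exact this.le
  have hDv : D y - D (x n) = (n:ℝ)⁻¹ * D v := by
    rw [← map_sub, hyx, map_smul, smul_eq_mul]
  have key_eq : (n:ℝ) * (φ y - φ (x n)) - D v = (n:ℝ) * (g y - g (x n)) := by
    simp only [hg]
    rw [show φ y - D y - (φ (x n) - D (x n)) = φ y - φ (x n) - (D y - D (x n)) by ring, hDv]
    field_simp
  rw [dist_eq_norm, key_eq, norm_mul, Real.norm_natCast]
  calc (n:ℝ) * ‖g y - g (x n)‖ ≤ (n:ℝ) * (ε' * ‖y - x n‖) := by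
        exact mul_le_mul_of_nonneg_left hmvt hnpos.le
    _ = ε' * ‖v‖ := by rw [hnv]; field_simp
    _ < ε' * (‖v‖ + 1) := by nlinarith [norm_nonneg v]
    _ = ε := by rw [hε'def]; field_simp

/-- For a `C¹` test function `φ`, the generators `A_N φ` evaluated along
rescaled states converging to `(z, r)` converge to
`F_z(z,r) ∂₁φ(z,r) + F_r(z,r) ∂₂φ(z,r)`. -/
theorem generator_tendsto_limit
    (β μ γ τ1 τ2 m c : ℝ)
    (hβ : 0 < β) (hμ : 0 < μ) (hγ : 0 < γ) (hτ1 : 0 < τ1) (hτ2 : 0 < τ2)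
    (hm : m ∈ Set.Ioo (0:ℝ) 1) (hc : c ∈ Set.Ioo (0:ℝ) 1)
    (φ : ℝ × ℝ → ℝ) (hφ : ContDiff ℝ 1 φ)
    (z r : ℝ) (hr0 : 0 ≤ r) (hrz : r ≤ z) (hz1 : z ≤ 1)
    (iN jN : ℕ → ℕ)
    (hji : ∀ n : ℕ, jN n ≤ iN n) (hiN : ∀ n : ℕ, iN n ≤ n)
    (hzc : Tendsto (fun n : ℕ => (iN n : ℝ) / n) atTop (nhds z))
    (hrc : Tendsto (fun n : ℕ => (jN n : ℝ) / n) atTop (nhds r)) :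
    Tendsto (fun n : ℕ => generatorApply β μ γ τ1 τ2 m c φ n (iN n) (jN n)) atTop
      (nhds
        ((m * μ + β * (z - c * r) * (1 - z) - (γ + τ1 + τ2 + μ) * z + τ1 * r)
            * fderiv ℝ φ (z, r) (1, 0)
          + (r * ((1 - c) * β * (1 - z) - (γ + τ2 + μ)))
            * fderiv ℝ φ (z, r) (0, 1))) := by
  set D := fderiv ℝ φ (z, r) with hDdef
  set x : ℕ → ℝ × ℝ := fun n => ((iN n : ℝ)/n, (jN n : ℝ)/n) with hxdef
  have hx : Tendsto x atTop (nhds (z, r)) := hzc.prodMk_nhds hrc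
  have K1 := key_deriv φ hφ (z,r) (1,0) x hx
  have K2 := key_deriv φ hφ (z,r) (1,1) x hx
  have K3 := key_deriv φ hφ (z,r) (0,-1) x hx
  have K4 := key_deriv φ hφ (z,r) (-1,-1) x hx
  have K5 := key_deriv φ hφ (z,r) (-1,0) x hx
  have C1 : Tendsto (fun n : ℕ => (1 - (iN n:ℝ)/n) * (((iN n:ℝ)/n - (jN n:ℝ)/n)*β + m*μ))
      atTop (nhds ((1-z)*((z-r)*β + m*μ))) :=
    (tendsto_const_nhds.sub hzc).mul (((hzc.sub hrc).mul_const β).add tendsto_const_nhds)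
  have C2 : Tendsto (fun n : ℕ => (1 - (iN n:ℝ)/n) * ((jN n:ℝ)/n) * (1-c) * β)
      atTop (nhds ((1-z)*r*(1-c)*β)) :=
    (((tendsto_const_nhds.sub hzc).mul hrc).mul_const (1-c)).mul_const β
  have C3 : Tendsto (fun n : ℕ => ((jN n:ℝ)/n) * m * μ) atTop (nhds (r*m*μ)) :=
    (hrc.mul_const m).mul_const μ
  have C4 : Tendsto (fun n : ℕ => ((jN n:ℝ)/n) * (γ+τ2+(1-m)*μ))
      atTop (nhds (r*(γ+τ2+(1-m)*μ))) := hrc.mul_const _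
  have C5 : Tendsto (fun n : ℕ => ((iN n:ℝ)/n - (jN n:ℝ)/n) * (γ+τ1+τ2+(1-m)*μ))
      atTop (nhds ((z-r)*(γ+τ1+τ2+(1-m)*μ))) := (hzc.sub hrc).mul_const _
  have hsum := ((((C1.mul K1).add (C2.mul K2)).add (C3.mul K3)).add (C4.mul K4)).add (C5.mul K5)
  have h11 : D (1,1) = D (1,0) + D (0,1) := by
    rw [show ((1:ℝ),(1:ℝ)) = ((1:ℝ),(0:ℝ)) + ((0:ℝ),(1:ℝ)) from by norm_num [Prod.ext_iff]]
    exact D.map_add _ _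
  have h01 : D (0,-1) = -D (0,1) := by
    rw [show ((0:ℝ),(-1:ℝ)) = -((0:ℝ),(1:ℝ)) from by norm_num [Prod.ext_iff]]
    exact D.map_neg _
  have hnn : D (-1,-1) = -(D (1,0) + D (0,1)) := by
    rw [show ((-1:ℝ),(-1:ℝ)) = -((1:ℝ),(1:ℝ)) from by norm_num [Prod.ext_iff], D.map_neg, h11]
  have hn0 : D (-1,0) = -D (1,0) := by
    rw [show ((-1:ℝ),(0:ℝ)) = -((1:ℝ),(0:ℝ)) from by norm_num [Prod.ext_iff]]
    exact D.map_neg _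
  have hval : (m * μ + β * (z - c * r) * (1 - z) - (γ + τ1 + τ2 + μ) * z + τ1 * r) * D (1, 0)
      + (r * ((1 - c) * β * (1 - z) - (γ + τ2 + μ))) * D (0, 1)
      = (1-z)*((z-r)*β + m*μ) * D (1,0) + (1-z)*r*(1-c)*β * D (1,1) + r*m*μ * D (0,-1)
        + (r*(γ+τ2+(1-m)*μ)) * D (-1,-1) + ((z-r)*(γ+τ1+τ2+(1-m)*μ)) * D (-1,0) := by
    rw [h11, h01, hnn, hn0]; ring
  rw [hval]
  refine Tendsto.congr' ?_ hsum
  filter_upwards [eventually_ge_atTop 1] with n hn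
  have hne : (n:ℝ) ≠ 0 := Nat.cast_ne_zero.mpr (by omega)
  have e1 : x n + (n:ℝ)⁻¹ • ((1:ℝ),(0:ℝ)) = (((iN n:ℝ)+1)/n, (jN n:ℝ)/n) := by
    simp only [hxdef, Prod.smul_mk, smul_eq_mul, Prod.mk_add_mk, Prod.mk.injEq]
    constructor <;> field_simp <;> try ring
  have e2 : x n + (n:ℝ)⁻¹ • ((1:ℝ),(1:ℝ)) = (((iN n:ℝ)+1)/n, ((jN n:ℝ)+1)/n) := by
    simp only [hxdef, Prod.smul_mk, smul_eq_mul, Prod.mk_add_mk, Prod.mk.injEq]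
    constructor <;> field_simp <;> try ring
  have e3 : x n + (n:ℝ)⁻¹ • ((0:ℝ),(-1:ℝ)) = ((iN n:ℝ)/n, ((jN n:ℝ)-1)/n) := by
    simp only [hxdef, Prod.smul_mk, smul_eq_mul, Prod.mk_add_mk, Prod.mk.injEq]
    constructor <;> field_simp <;> try ring
  have e4 : x n + (n:ℝ)⁻¹ • ((-1:ℝ),(-1:ℝ)) = (((iN n:ℝ)-1)/n, ((jN n:ℝ)-1)/n) := by
    simp only [hxdef, Prod.smul_mk, smul_eq_mul, Prod.mk_add_mk, Prod.mk.injEq]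
    constructor <;> field_simp <;> try ring
  have e5 : x n + (n:ℝ)⁻¹ • ((-1:ℝ),(0:ℝ)) = (((iN n:ℝ)-1)/n, (jN n:ℝ)/n) := by
    simp only [hxdef, Prod.smul_mk, smul_eq_mul, Prod.mk_add_mk, Prod.mk.injEq]
    constructor <;> field_simp <;> try ring
  have ex : x n = ((iN n:ℝ)/n, (jN n:ℝ)/n) := rfl
  rw [e1, e2, e3, e4, e5, ex]
  simp only [generatorApply]
  field_simp
end

section
/- Suppose the family of vectors P_0(s) ∈ ℝ^N and P_j(s) ∈ ℝ^{N−j} (1 ≤ j ≤ N−1, s ∈ ℕ) satisfies the 1S first-step system. Define H_1 = I_{N−1} − (1−δ_{1,N−1})C_1(0) and, for 2 ≤ j ≤ N−1, H_j = I_{N−j} − (1−δ_{j,N−1})C_j(0) − C_{j−1}(1)·H_{j−1}^{−1}·C_j(2); assume each H_j (1 ≤ j ≤ N−1) is invertible. For s ∈ ℕ define h_1(s) = H_1^{−1}·(δ_{s,0}p_1 + (1−δ_{s,0})B_1·P_1(s−1) + C_0(1)·P_0(s)) and, for 2 ≤ j ≤ N−1, h_j(s) = H_j^{−1}·(δ_{s,0}p_j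 + (1−δ_{s,0})B_j·P_j(s−1) + C_{j−1}(1)·h_{j−1}(s)). Then for every s ∈ ℕ and every 1 ≤ j ≤ N−1: P_j(s) = h_j(s) + (1−δ_{j,N−1})·H_j^{−1}·C_{j+1}(2)·P_{j+1}(s). -/
/-! Forward block Gaussian elimination on the block-tridiagonal system. Once `P_{j-1}(s)` is
known to equal `h_{j-1}(s) + H_{j-1}⁻¹ C_j(2) P_j(s)`, substituting it into the `j`-th equation
turns that equation into `H_j P_j(s) = (input) + C_{j-1}(1) h_{j-1}(s) + C_{j+1}(2) P_{j+1}(s)`,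
with `H_j` the Schur-complement recursion; inverting `H_j` gives the claim at level `j`. At
level `1` the known neighbour is `P_0(s)` itself, i.e. the same step with a zero coupling. -/

open Matrix

noncomputable section

/-- The model parameters of the two-strain hospital-ward Markov chain. -/
structure ModelParams where
  β : ℝ
  μ : ℝ
  γ : ℝ
  τ1 : ℝ
  τ2 : ℝ
  m : ℝ
  c : ℝ

/-- Positivity/range conditions on the parameters. -/
def ModelParams.Valid (π : ModelParams) : Prop :=
  0 < π.β ∧ 0 < π.μ ∧ 0 < π.γ ∧ 0 < π.τ1 ∧ 0 < π.τ2 ∧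
    π.m ∈ Set.Ioo (0:ℝ) 1 ∧ π.c ∈ Set.Ioo (0:ℝ) 1

/-- The total exit rate `q(i,j)` of state `(i,j)`. -/
def qr (N : ℕ) (π : ModelParams) (i j : ℕ) : ℝ :=
  ((N : ℝ) - i) * (((i : ℝ) - j * π.c) * π.β + π.m * π.μ)
    + ((i : ℝ) - j) * (π.γ + π.τ1 + π.τ2 + (1 - π.m) * π.μ)
    + (j : ℝ) * (π.γ + π.τ2 + π.μ)

/-- The matrix `B_j` (Appendix A/B; `B_0` for `j = 0`), 0-based indexing: the 1-based
row index `i` corresponds to `k + 1` for `k : Fin (N - j)`. -/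
def Bm (N : ℕ) (π : ModelParams) (j : ℕ) : Matrix (Fin (N - j)) (Fin (N - j)) ℝ :=
  fun k l =>
    if (l : ℕ) = (k : ℕ) then π.m * π.μ / qr N π (j + (k : ℕ) + 1) j
    else if (l : ℕ) = (k : ℕ) + 1 then
      ((N : ℝ) - j - ((k : ℕ) + 1)) * π.β / qr N π (j + (k : ℕ) + 1) j
    else 0

/-- The matrix `C_j(0)` (Appendix A/B; `C_0(0)` for `j = 0`). -/
def Cm0 (N : ℕ) (π : ModelParams) (j : ℕ) : Matrix (Fin (N - j)) (Fin (N - j)) ℝ :=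
  fun k l =>
    if (l : ℕ) + 1 = (k : ℕ) then
      ((k : ℕ) : ℝ) * (π.γ + π.τ1 + π.τ2 + (1 - π.m) * π.μ) / qr N π (j + (k : ℕ) + 1) j
    else if (l : ℕ) = (k : ℕ) then
      (((N : ℝ) - j - ((k : ℕ) + 1)) * (1 - π.m) * π.μ + ((k : ℕ) : ℝ) * π.m * π.μ)
        / qr N π (j + (k : ℕ) + 1) j
    else if (l : ℕ) = (k : ℕ) + 1 then
      ((N : ℝ) - j - ((k : ℕ) + 1)) * (((k : ℕ) : ℝ) * π.β + π.m * π.μ)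
        / qr N π (j + (k : ℕ) + 1) j
    else 0

/-- The matrix `C_{j-1}(1)` (Appendix B), of dimension `(N-j) × (N-(j-1))`. -/
def Cm1 (N : ℕ) (π : ModelParams) (j : ℕ) :
    Matrix (Fin (N - j)) (Fin (N - (j - 1))) ℝ :=
  fun k l =>
    if (l : ℕ) = (k : ℕ) then
      (j : ℝ) * (π.γ + π.τ2 + (1 - π.m) * π.μ) / qr N π (j + (k : ℕ) + 1) j
    else if (l : ℕ) = (k : ℕ) + 1 then
      (j : ℝ) * π.m * π.μ / qr N π (j + (k : ℕ) + 1) j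
    else 0

/-- The matrix `C_{j+1}(2)` (Appendix B), of dimension `(N-j) × (N-(j+1))`. -/
def Cm2 (N : ℕ) (π : ModelParams) (j : ℕ) :
    Matrix (Fin (N - j)) (Fin (N - (j + 1))) ℝ :=
  fun k l =>
    if (l : ℕ) = (k : ℕ) then
      ((N : ℝ) - j - ((k : ℕ) + 1)) * j * (1 - π.c) * π.β / qr N π (j + (k : ℕ) + 1) j
    else 0

/-- The vector `p_{j,1_S}` (Appendix A/B). -/
def pS (N : ℕ) (π : ModelParams) (j : ℕ) : Fin (N - j) → ℝ :=
  fun k => (π.γ + π.τ1 + π.τ2 + (1 - π.m) * π.μ) / qr N π (j + (k : ℕ) + 1) j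

/-- The matrix `E_j` (Appendix C), diagonal, of dimension `(N-j+1) × (N-(j-1))`;
the 1-based row index `k` corresponds to state `(j-1+k, j)`. -/
def Em (N : ℕ) (π : ModelParams) (j : ℕ) :
    Matrix (Fin (N - j + 1)) (Fin (N - (j - 1))) ℝ :=
  fun k l =>
    if (l : ℕ) = (k : ℕ) then π.m * π.μ / qr N π (j + (k : ℕ)) j else 0

/-- The matrix `F_j` (Appendix C), of dimension `(N-j+1) × (N-j)`. -/
def Fm (N : ℕ) (π : ModelParams) (j : ℕ) :
    Matrix (Fin (N - j + 1)) (Fin (N - (j + 1) + 1)) ℝ :=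
  fun k l =>
    if (l : ℕ) = (k : ℕ) then
      ((N : ℝ) - j - (k : ℕ)) * (1 - π.c) * π.β / qr N π (j + (k : ℕ)) j
    else 0

/-- The matrix `D_j(0)` (Appendix C). -/
def Dm0 (N : ℕ) (π : ModelParams) (j : ℕ) :
    Matrix (Fin (N - j + 1)) (Fin (N - j + 1)) ℝ :=
  fun k l =>
    if (l : ℕ) + 1 = (k : ℕ) then
      ((k : ℕ) : ℝ) * (π.γ + π.τ1 + π.τ2 + (1 - π.m) * π.μ) / qr N π (j + (k : ℕ)) j
    else if (l : ℕ) = (k : ℕ) then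
      (((N : ℝ) - j - (k : ℕ)) * (1 - π.m) * π.μ + ((k : ℕ) : ℝ) * π.m * π.μ)
        / qr N π (j + (k : ℕ)) j
    else if (l : ℕ) = (k : ℕ) + 1 then
      ((N : ℝ) - j - (k : ℕ)) * (((k : ℕ) : ℝ) * π.β + π.m * π.μ) / qr N π (j + (k : ℕ)) j
    else 0

/-- The matrix `D_{j-1}(1)` (Appendix C), of dimension `(N-j+1) × (N-j+2)`. -/
def Dm1 (N : ℕ) (π : ModelParams) (j : ℕ) :
    Matrix (Fin (N - j + 1)) (Fin (N - (j - 1) + 1)) ℝ :=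
  fun k l =>
    if (l : ℕ) = (k : ℕ) then
      ((j : ℝ) - 1) * (π.γ + π.τ2 + (1 - π.m) * π.μ) / qr N π (j + (k : ℕ)) j
    else if (l : ℕ) = (k : ℕ) + 1 then
      ((j : ℝ) - 1) * π.m * π.μ / qr N π (j + (k : ℕ)) j
    else 0

/-- The matrix `D_{j+1}(2)` (Appendix C), of dimension `(N-j+1) × (N-j)`. -/
def Dm2 (N : ℕ) (π : ModelParams) (j : ℕ) :
    Matrix (Fin (N - j + 1)) (Fin (N - (j + 1) + 1)) ℝ :=
  fun k l =>
    if (l : ℕ) = (k : ℕ) then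
      ((N : ℝ) - j - (k : ℕ)) * ((j : ℝ) - 1) * (1 - π.c) * π.β / qr N π (j + (k : ℕ)) j
    else 0

/-- The vector `p_{j,1_R}` (Section 3.2). -/
def pR (N : ℕ) (π : ModelParams) (j : ℕ) : Fin (N - j + 1) → ℝ :=
  fun k => (π.γ + π.τ2 + (1 - π.m) * π.μ) / qr N π (j + (k : ℕ)) j

/-- The `1S` first-step system (equations (1)–(4) of the paper) for the family of
conditional-probability vectors `P j s = P_{j,1_S}(s)`, `0 ≤ j ≤ N−1`. -/
def OneSSystem (N : ℕ) (π : ModelParams)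
    (P : (j : ℕ) → ℕ → Fin (N - j) → ℝ) : Prop :=
  IsUnit (1 - Cm0 N π 0) ∧
  (∀ s : ℕ, P 0 s = (1 - Cm0 N π 0)⁻¹.mulVec
      (if s = 0 then pS N π 0 else (Bm N π 0).mulVec (P 0 (s - 1)))) ∧
  (∀ j s : ℕ, j + 1 ≤ N - 1 →
    P (j + 1) s
      = (if s = 0 then pS N π (j + 1) else (Bm N π (j + 1)).mulVec (P (j + 1) (s - 1)))
        + (Cm1 N π (j + 1)).mulVec (P j s)
        + (if j + 1 = N - 1 then 0 else
            (Cm0 N π (j + 1)).mulVec (P (j + 1) s)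
              + (Cm2 N π (j + 1)).mulVec (P (j + 2) s)))

/-- The `(·,0)`-system (Theorem 2 of the paper) for the vectors
`PR j s = P_{j,1_R}(s,0)`, `1 ≤ j ≤ N`, coupled with a `1S` family `P`. -/
def RZeroSystem (N : ℕ) (π : ModelParams)
    (P : (j : ℕ) → ℕ → Fin (N - j) → ℝ)
    (PR : (j : ℕ) → ℕ → Fin (N - j + 1) → ℝ) : Prop :=
  (∀ s : ℕ, PR 1 s = (Dm0 N π 1).mulVec (PR 1 s)
      + (if s = 0 then pR N π 1 else (Em N π 1).mulVec (P 0 (s - 1)))) ∧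
  (∀ j s : ℕ, 1 ≤ j → j + 1 ≤ N →
    PR (j + 1) s
      = (if s = 0 then pR N π (j + 1) else (Em N π (j + 1)).mulVec (P j (s - 1)))
        + (Dm1 N π (j + 1)).mulVec (PR j s)
        + (if j + 1 = N then 0 else
            (Dm0 N π (j + 1)).mulVec (PR (j + 1) s)
              + (Dm2 N π (j + 1)).mulVec (PR (j + 2) s)))

/-- The `(·,r)`-system for `r ≥ 1` (Theorem 3 of the paper) for the vectors
`PR j s r = P_{j,1_R}(s,r)`, `1 ≤ j ≤ N`. -/
def RPosSystem (N : ℕ) (π : ModelParams)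
    (PR : (j : ℕ) → ℕ → ℕ → Fin (N - j + 1) → ℝ) : Prop :=
  (∀ s r : ℕ, PR 1 s (r + 1) = (Dm0 N π 1).mulVec (PR 1 s (r + 1))
      + (Fm N π 1).mulVec (PR 2 s r)) ∧
  (∀ j s r : ℕ, 1 ≤ j → j + 1 ≤ N →
    PR (j + 1) s (r + 1)
      = (if j + 1 = N then 0 else (Fm N π (j + 1)).mulVec (PR (j + 2) s r))
        + (Dm1 N π (j + 1)).mulVec (PR j s (r + 1))
        + (if j + 1 = N then 0 else
            (Dm0 N π (j + 1)).mulVec (PR (j + 1) s (r + 1))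
              + (Dm2 N π (j + 1)).mulVec (PR (j + 2) s (r + 1))))

theorem Matrix.eq_of_block_elimination_step {R : Type*} [CommRing R]
    {n m k : Type*} [Fintype n] [Fintype m] [Fintype k] [DecidableEq n]
    {H A : Matrix n n R} {L : Matrix n m R} {T : Matrix m n R} {C : Matrix n k R}
    (hH : IsUnit H) (hHdef : H = 1 - A - L * T)
    {x b : n → R} {y u : m → R} {z : k → R}
    (hy : y = u + T *ᵥ x) (hx : x = b + L *ᵥ y + A *ᵥ x + C *ᵥ z) :
    x = H⁻¹ *ᵥ (b + L *ᵥ u) + (H⁻¹ * C) *ᵥ z := by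
  have := hH.invertible
  have hHx : H *ᵥ x = b + L *ᵥ u + C *ᵥ z := by
    rw [hHdef, sub_mulVec, sub_mulVec, one_mulVec, ← mulVec_mulVec]
    nth_rewrite 1 [hx]
    rw [hy, mulVec_add]
    abel
  rw [inv_mulVec_eq_vec hHx.symm |>.symm, ← mulVec_mulVec, ← mulVec_add]

theorem Matrix.eq_of_block_elimination_step_ite {R : Type*} [CommRing R]
    {n m k : Type*} [Fintype n] [Fintype m] [Fintype k] [DecidableEq n]
    (last : Prop) [Decidable last]
    {H A : Matrix n n R} {L : Matrix n m R} {T : Matrix m n R} {C : Matrix n k R}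
    (hH : IsUnit H) (hHdef : H = 1 - (if last then 0 else A) - L * T)
    {x b : n → R} {y u : m → R} {z : k → R}
    (hy : y = u + T *ᵥ x)
    (hx : x = b + L *ᵥ y + (if last then 0 else A *ᵥ x + C *ᵥ z)) :
    x = H⁻¹ *ᵥ (b + L *ᵥ u) + (if last then 0 else (H⁻¹ * C) *ᵥ z) := by
  split_ifs at hHdef hx ⊢
  · simpa using eq_of_block_elimination_step (C := (0 : Matrix n Unit R)) (z := 0)
      hH hHdef hy (by simpa using hx)
  · rw [← add_assoc] at hx
    exact eq_of_block_elimination_step hH hHdef hy hx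

theorem oneS_block_elimination_general
    (N : ℕ) (π : ModelParams)
    (P : (j : ℕ) → ℕ → Fin (N - j) → ℝ)
    (hP : OneSSystem N π P)
    (H : (j : ℕ) → Matrix (Fin (N - j)) (Fin (N - j)) ℝ)
    (hH1 : H 1 = 1 - (if 1 = N - 1 then 0 else Cm0 N π 1))
    (hHrec : ∀ j : ℕ, 1 ≤ j → j + 1 ≤ N - 1 →
      H (j + 1) = 1 - (if j + 1 = N - 1 then 0 else Cm0 N π (j + 1))
        - (show Matrix (Fin (N - (j + 1))) (Fin (N - j)) ℝ from Cm1 N π (j + 1))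
            * (H j)⁻¹ * Cm2 N π j)
    (hHinv : ∀ j : ℕ, 1 ≤ j → j ≤ N - 1 → IsUnit (H j))
    (hv : (j : ℕ) → ℕ → Fin (N - j) → ℝ)
    (hv1 : ∀ s : ℕ, hv 1 s = (H 1)⁻¹.mulVec
      ((if s = 0 then pS N π 1 else (Bm N π 1).mulVec (P 1 (s - 1)))
        + (Cm1 N π 1).mulVec (P 0 s)))
    (hvrec : ∀ j s : ℕ, 1 ≤ j → j + 1 ≤ N - 1 →
      hv (j + 1) s = (H (j + 1))⁻¹.mulVec
        ((if s = 0 then pS N π (j + 1) else (Bm N π (j + 1)).mulVec (P (j + 1) (s - 1)))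
          + (Cm1 N π (j + 1)).mulVec (hv j s))) :
    ∀ s j : ℕ, 1 ≤ j → j ≤ N - 1 →
      P j s = hv j s
        + (if j = N - 1 then 0 else ((H j)⁻¹ * Cm2 N π j).mulVec (P (j + 1) s)) := by
  intro s j hj1 hjN
  induction j, hj1 using Nat.le_induction with
  | base =>
    rw [hv1]
    refine eq_of_block_elimination_step_ite _ (hHinv 1 le_rfl hjN) (T := 0)
      (by rw [hH1, Matrix.mul_zero, sub_zero]) (by rw [zero_mulVec, add_zero]) ?_
    exact hP.2.2 0 s hjN
  | succ j hj IH =>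
    have hy := IH (by omega)
    rw [if_neg (by omega)] at hy
    rw [hvrec j s hj hjN]
    refine eq_of_block_elimination_step_ite _ (hHinv (j + 1) (by omega) hjN)
      (by rw [hHrec j hj hjN, Matrix.mul_assoc]) hy ?_
    exact hP.2.2 j s hjN

/-- **Theorem 1 of the paper.** Block-Gaussian elimination solution of the
`1S` first-step system: with `H_1 = I − (1−δ_{1,N−1})C_1(0)`,
`H_j = I − (1−δ_{j,N−1})C_j(0) − C_{j−1}(1) H_{j−1}⁻¹ C_j(2)` all invertible, and the
vectors `h_j(s)` defined by the forward recursion, one has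
`P_j(s) = h_j(s) + (1−δ_{j,N−1}) H_j⁻¹ C_{j+1}(2) P_{j+1}(s)` for `1 ≤ j ≤ N−1`. -/
theorem oneS_block_elimination
    (N : ℕ) (hN : 2 ≤ N) (π : ModelParams) (hπ : π.Valid)
    (P : (j : ℕ) → ℕ → Fin (N - j) → ℝ)
    (hP : OneSSystem N π P)
    (H : (j : ℕ) → Matrix (Fin (N - j)) (Fin (N - j)) ℝ)
    (hH1 : H 1 = 1 - (if 1 = N - 1 then 0 else Cm0 N π 1))
    (hHrec : ∀ j : ℕ, 1 ≤ j → j + 1 ≤ N - 1 →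
      H (j + 1) = 1 - (if j + 1 = N - 1 then 0 else Cm0 N π (j + 1))
        - (show Matrix (Fin (N - (j + 1))) (Fin (N - j)) ℝ from Cm1 N π (j + 1))
            * (H j)⁻¹ * Cm2 N π j)
    (hHinv : ∀ j : ℕ, 1 ≤ j → j ≤ N - 1 → IsUnit (H j))
    (hv : (j : ℕ) → ℕ → Fin (N - j) → ℝ)
    (hv1 : ∀ s : ℕ, hv 1 s = (H 1)⁻¹.mulVec
      ((if s = 0 then pS N π 1 else (Bm N π 1).mulVec (P 1 (s - 1)))
        + (Cm1 N π 1).mulVec (P 0 s)))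
    (hvrec : ∀ j s : ℕ, 1 ≤ j → j + 1 ≤ N - 1 →
      hv (j + 1) s = (H (j + 1))⁻¹.mulVec
        ((if s = 0 then pS N π (j + 1) else (Bm N π (j + 1)).mulVec (P (j + 1) (s - 1)))
          + (Cm1 N π (j + 1)).mulVec (hv j s))) :
    ∀ s j : ℕ, 1 ≤ j → j ≤ N - 1 →
      P j s = hv j s
        + (if j = N - 1 then 0 else ((H j)⁻¹ * Cm2 N π j).mulVec (P (j + 1) s)) :=
  oneS_block_elimination_general N π P hP H hH1 hHrec hHinv hv hv1 hvrec
end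
end

section
/- Suppose P : ℕ → ℝ^N satisfies P(s) = (I_N − C0(0))^{−1}·(δ_{s,0}p0 + (1−δ_{s,0})B0·P(s−1)) for all s ∈ ℕ, with I_N − C0(0) invertible, and suppose every entry of every P(s) lies in [0,1]. Let x ∈ ℝ with |x| < 1 be such that I_N − C0(0) − x·B0 is invertible. Then the series Σ_{s=0}^∞ x^s·P(s) converges absolutely (entrywise) and Σ_{s=0}^∞ x^s·P(s) = (I_N − C0(0) − x·B0)^{−1}·p0. -/
open Matrix

noncomputable section

/-! Multiplying the recurrence `A P(s+1) = B P(s)` by `xˢ⁺¹` and summing over `s` telescopes into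
`A S = p₀ + x B S` for the generating function `S = Σ xˢ P(s)`, which converges absolutely because
the `P(s)` are bounded and `|x| < 1`. Hence `(A - x B) S = p₀` with `A = I - C₀(0)`, `B = B₀`. -/

theorem summable_abs_pow_mul_of_abs_le {x C : ℝ} (hx : |x| < 1) {f : ℕ → ℝ}
    (hf : ∀ s, |f s| ≤ C) : Summable fun s => |x ^ s * f s| := by
  refine .of_nonneg_of_le (fun s => abs_nonneg _) (fun s => ?_)
    ((summable_geometric_of_lt_one (abs_nonneg x) hx).mul_right C)
  rw [abs_mul, abs_pow]
  exact mul_le_mul_of_nonneg_left (hf s) (pow_nonneg (abs_nonneg x) s)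

namespace Matrix

variable {m n R : Type*} [Fintype n] [CommRing R]

theorem mulVec_eq_of_eq_inv_mulVec [DecidableEq n] {A : Matrix n n R} (hA : IsUnit A)
    {u v : n → R} (h : v = A⁻¹ *ᵥ u) : A *ᵥ v = u := by
  rw [h, mulVec_mulVec, mul_nonsing_inv A ((isUnit_iff_isUnit_det A).mp hA), one_mulVec]

variable [TopologicalSpace R] [IsTopologicalRing R]

theorem continuous_mulVecLin (A : Matrix m n R) : Continuous A.mulVecLin := by
  rw [coe_mulVecLin]
  exact continuous_const.matrix_mulVec continuous_id

theorem _root_.Summable.matrix_mulVec {ι : Type*} {v : ι → n → R} (hv : Summable v)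
    (A : Matrix m n R) : Summable fun s => A *ᵥ v s :=
  hv.map A.mulVecLin A.continuous_mulVecLin

variable [T2Space R]

theorem mulVec_tsum {ι : Type*} {v : ι → n → R} (hv : Summable v) (A : Matrix m n R) :
    A *ᵥ ∑' s, v s = ∑' s, A *ᵥ v s :=
  hv.map_tsum A.mulVecLin A.continuous_mulVecLin

theorem sub_smul_mulVec_tsum_pow_smul {A B : Matrix n n R} {p : n → R} {v : ℕ → n → R} {x : R}
    (h0 : A *ᵥ v 0 = p) (hstep : ∀ s, A *ᵥ v (s + 1) = B *ᵥ v s)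
    (hv : Summable fun s => x ^ s • v s) :
    (A - x • B) *ᵥ ∑' s, x ^ s • v s = p := by
  have hAv := hv.matrix_mulVec A
  have hBv := hv.matrix_mulVec B
  simp only [mulVec_smul] at hAv hBv
  have hA : A *ᵥ ∑' s, x ^ s • v s = p + x • B *ᵥ ∑' s, x ^ s • v s := by
    rw [mulVec_tsum hv, mulVec_tsum hv B]
    simp only [mulVec_smul]
    rw [hAv.tsum_eq_zero_add, ← hBv.tsum_const_smul]
    simp only [pow_zero, one_smul, h0, hstep, pow_succ', mul_smul]
  rw [sub_mulVec, hA, smul_mulVec, add_sub_cancel_right]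

theorem tsum_pow_smul_eq_inv_mulVec [DecidableEq n] {A B : Matrix n n R} {p : n → R}
    {v : ℕ → n → R} {x : R} (hinv : IsUnit (A - x • B)) (h0 : A *ᵥ v 0 = p)
    (hstep : ∀ s, A *ᵥ v (s + 1) = B *ᵥ v s) (hv : Summable fun s => x ^ s • v s) :
    ∑' s, x ^ s • v s = (A - x • B)⁻¹ *ᵥ p := by
  let := hinv.invertible
  exact (inv_mulVec_eq_vec (sub_smul_mulVec_tsum_pow_smul h0 hstep hv).symm).symm

end Matrix

theorem generating_function_level_zero_general
    (N : ℕ) (π : ModelParams)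
    (P : ℕ → Fin N → ℝ)
    (hC0inv : IsUnit (1 - Cm0 N π 0))
    (hP : ∀ s : ℕ, P s = (1 - Cm0 N π 0)⁻¹.mulVec
      (if s = 0 then pS N π 0 else (Bm N π 0).mulVec (P (s - 1))))
    (hbound : ∀ (s : ℕ) (i : Fin N), P s i ∈ Set.Icc (0:ℝ) 1)
    (x : ℝ) (hx : |x| < 1)
    (hxinv : IsUnit (1 - Cm0 N π 0 - x • Bm N π 0)) :
    (∀ i : Fin N, Summable (fun s : ℕ => |x ^ s * P s i|)) ∧
    (∀ i : Fin N,
      (∑' s : ℕ, x ^ s * P s i)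
        = (1 - Cm0 N π 0 - x • Bm N π 0)⁻¹.mulVec (pS N π 0) i) := by
  have habs : ∀ i, Summable fun s => |x ^ s * P s i| := fun i =>
    summable_abs_pow_mul_of_abs_le hx fun s =>
      abs_le.2 ⟨by linarith [(hbound s i).1], (hbound s i).2⟩
  have hsum : Summable fun s => x ^ s • P s := Pi.summable.2 fun i => (habs i).of_abs
  have h0 : (1 - Cm0 N π 0) *ᵥ P 0 = pS N π 0 :=
    mulVec_eq_of_eq_inv_mulVec hC0inv (by simpa using hP 0)
  have hstep : ∀ s, (1 - Cm0 N π 0) *ᵥ P (s + 1) = Bm N π 0 *ᵥ P s := fun s =>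
    mulVec_eq_of_eq_inv_mulVec hC0inv (by simpa using hP (s + 1))
  refine ⟨habs, fun i => ?_⟩
  rw [← tsum_pow_smul_eq_inv_mulVec hxinv h0 hstep hsum, tsum_apply hsum]
  rfl

/-- If `P : ℕ → ℝ^N` satisfies
`P(s) = (I − C₀(0))⁻¹(δ_{s,0} p₀ + (1−δ_{s,0}) B₀ P(s−1))` with all entries in `[0,1]`,
then for `|x| < 1` with `I − C₀(0) − x B₀` invertible the generating series converges
absolutely entrywise and `Σ_{s≥0} xˢ P(s) = (I − C₀(0) − x B₀)⁻¹ p₀`. -/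
theorem generating_function_level_zero
    (N : ℕ) (hN : 2 ≤ N) (π : ModelParams) (hπ : π.Valid)
    (P : ℕ → Fin N → ℝ)
    (hC0inv : IsUnit (1 - Cm0 N π 0))
    (hP : ∀ s : ℕ, P s = (1 - Cm0 N π 0)⁻¹.mulVec
      (if s = 0 then pS N π 0 else (Bm N π 0).mulVec (P (s - 1))))
    (hbound : ∀ (s : ℕ) (i : Fin N), P s i ∈ Set.Icc (0:ℝ) 1)
    (x : ℝ) (hx : |x| < 1)
    (hxinv : IsUnit (1 - Cm0 N π 0 - x • Bm N π 0)) :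
    (∀ i : Fin N, Summable (fun s : ℕ => |x ^ s * P s i|)) ∧
    (∀ i : Fin N,
      (∑' s : ℕ, x ^ s * P s i)
        = (1 - Cm0 N π 0 - x • Bm N π 0)⁻¹.mulVec (pS N π 0) i) :=
  generating_function_level_zero_general N π P hC0inv hP hbound x hx hxinv
end
end

section
/- Suppose the family P_0(s) ∈ ℝ^N, P_j(s) ∈ ℝ^{N−j} (1 ≤ j ≤ N−1, s ∈ ℕ) satisfies the 1S first-step system and that every entry of every P_j(s) is nonnegative. Fix n ≥ 1 and assume that, for each 0 ≤ k ≤ n and each 0 ≤ j ≤ N−1, the factorial-moment vector φ^{(k)}_j := Σ_{s=0}^∞ s(s−1)⋯(s−k+1)·P_j(s) converges entrywise (with the convention that the weight is 1 when k = 0). Assume I_N − C0(0) − B0 is invertible, and define G_1 = I_{N−1} − B_1 − (1−δ_{1,N−1})C_1(0) and, for 2 ≤ j ≤ N−1, G_j = I_{N−j} − B_j − (1−δ_{j,N−1})C_j(0) − C_{j−1}(1)·G_{j−1}^{−1}·C_j(2); assume each G_j is invertible. Then: φ^{(n)}_0 = n·(I_N − C0(0) − B0)^{−1}·B0·φ^{(n−1)}_0,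 and for 1 ≤ j ≤ N−1, φ^{(n)}_j = g^{(n)}_j + (1−δ_{j,N−1})·G_j^{−1}·C_{j+1}(2)·φ^{(n)}_{j+1}, where g^{(n)}_1 = G_1^{−1}·(n·B_1·φ^{(n−1)}_1 + C_0(1)·φ^{(n)}_0) and, for 2 ≤ j ≤ N−1, g^{(n)}_j = G_j^{−1}·(n·B_j·φ^{(n−1)}_j + C_{j−1}(1)·g^{(n)}_{j−1}). -/
/-!
Multiplying the first-step equations by the falling factorial `s^{(n)}` and summing over `s`
turns them into linear equations for the factorial moments. A one-step delay `s ↦ B P(s - 1)`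
contributes `B (φ⁽ⁿ⁾ + n φ⁽ⁿ⁻¹⁾)`, because `(s + 1)^{(n)} = s^{(n)} + n s^{(n-1)}`, while the
initial term `p` is killed by `0^{(n)} = 0`. The resulting equation for `j = 0` is solved
directly; the block-tridiagonal system for `j ≥ 1` is solved by forward block elimination,
the `G_j` being the successive Schur complements.
-/

open Matrix

noncomputable section

theorem Nat.succ_descFactorial_succ_eq_add (s k : ℕ) :
    (s + 1).descFactorial (k + 1) = s.descFactorial (k + 1) + (k + 1) * s.descFactorial k := by
  rw [Nat.succ_descFactorial_succ, Nat.descFactorial_succ]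
  rcases le_or_gt k s with hks | hsk
  · rw [← add_mul]
    congr 1
    omega
  · simp [Nat.descFactorial_eq_zero_iff_lt.mpr hsk]

section FactorialMoment

variable {E : Type*} [AddCommGroup E] [Module ℝ E] [TopologicalSpace E]

def HasFactorialMoment (P : ℕ → E) (k : ℕ) (a : E) : Prop :=
  HasSum (fun s => (s.descFactorial k : ℝ) • P s) a

theorem HasFactorialMoment.unique [T2Space E] {P : ℕ → E} {k : ℕ} {a b : E}
    (ha : HasFactorialMoment P k a) (hb : HasFactorialMoment P k b) : a = b :=
  HasSum.unique ha hb

theorem HasFactorialMoment.add [ContinuousAdd E] {P Q : ℕ → E} {k : ℕ} {a b : E}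
    (ha : HasFactorialMoment P k a) (hb : HasFactorialMoment Q k b) :
    HasFactorialMoment (P + Q) k (a + b) := by
  simpa only [HasFactorialMoment, Pi.add_apply, smul_add] using HasSum.add ha hb

/-- The weight `(s + 1)^{(k + 1)}` of the delayed sequence splits as
`s^{(k + 1)} + (k + 1) s^{(k)}`, and the weight `0^{(k + 1)}` of its initial term vanishes. -/
theorem HasFactorialMoment.delay [IsTopologicalAddGroup E] [ContinuousConstSMul ℝ E]
    {P Q : ℕ → E} {k : ℕ} {a b : E} (hQ : ∀ s, Q (s + 1) = P s)
    (ha : HasFactorialMoment P (k + 1) a) (hb : HasFactorialMoment P k b) :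
    HasFactorialMoment Q (k + 1) (a + ((k : ℝ) + 1) • b) := by
  have hshift : HasSum (fun s => (((s + 1).descFactorial (k + 1) : ℕ) : ℝ) • Q (s + 1))
      (a + ((k : ℝ) + 1) • b) := by
    convert HasSum.add ha (hb.const_smul ((k : ℝ) + 1)) using 2 with s
    rw [hQ, Nat.succ_descFactorial_succ_eq_add, smul_smul, ← add_smul]
    push_cast
    ring_nf
  rw [HasFactorialMoment, ← hasSum_nat_add_iff' 1]
  simpa using hshift

end FactorialMoment

section Vectors

variable {m n : Type*} [Fintype n]

theorem HasFactorialMoment.mulVec {P : ℕ → n → ℝ} {k : ℕ} {a : n → ℝ}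
    (h : HasFactorialMoment P k a) (M : Matrix m n ℝ) :
    HasFactorialMoment (fun s => M *ᵥ P s) k (M *ᵥ a) := by
  simpa only [HasFactorialMoment, Function.comp_def, mulVecLin_apply, mulVec_smul] using
    HasSum.map h (Matrix.mulVecLin M) (continuous_const.matrix_mulVec continuous_id)

theorem HasFactorialMoment.ite_zero_mulVec_pred {P : ℕ → n → ℝ} {k : ℕ} {a b : n → ℝ}
    (hk : 1 ≤ k) (ha : HasFactorialMoment P k a) (hb : HasFactorialMoment P (k - 1) b)
    (B : Matrix m n ℝ) (p : m → ℝ) :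
    HasFactorialMoment (fun s => if s = 0 then p else B *ᵥ P (s - 1)) k
      (B *ᵥ (a + (k : ℝ) • b)) := by
  obtain ⟨k, rfl⟩ : ∃ i, k = i + 1 := ⟨k - 1, by omega⟩
  have := (ha.delay (Q := fun s => if s = 0 then 0 else P (s - 1)) (by simp) hb).mulVec B
  unfold HasFactorialMoment at this ⊢
  push_cast
  convert this using 2 with s
  rcases s with _ | s <;> simp

end Vectors

section BlockElimination

variable {R : Type*} [CommRing R] {a b c : Type*} [Fintype a] [DecidableEq a] [Fintype b]
  [Fintype c]

theorem Matrix.eq_smul_inv_mul_mulVec_of_eq {B C : Matrix a a R} (hC : IsUnit (1 - C))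
    (hCB : IsUnit (1 - C - B)) {r : R} {x y : a → R}
    (hx : x = (1 - C)⁻¹ *ᵥ (B *ᵥ (x + r • y))) :
    x = r • ((1 - C - B)⁻¹ * B) *ᵥ y := by
  let _ := hC.invertible
  let _ := hCB.invertible
  have hx' : (1 - C) *ᵥ x = B *ᵥ (x + r • y) := by
    rw [hx, mulVec_mulVec, mul_inv_of_invertible, one_mulVec, ← hx]
  rw [← mulVec_mulVec, ← mulVec_smul]
  refine (inv_mulVec_eq_vec ?_).symm
  rw [sub_mulVec, hx', mulVec_add, mulVec_smul]
  abel

/-- Substituting `u = v + K x` into the equation for `x` leaves `G x = r B y + C v + T z`,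
with `G` the Schur complement. -/
theorem Matrix.eq_inv_mulVec_of_block_eq (p : Prop) [Decidable p]
    {G B D : Matrix a a R} {C : Matrix a b R} {K : Matrix b a R} {T : Matrix a c R}
    (hG : IsUnit G) (hGdef : G = 1 - B - (if p then 0 else D) - C * K)
    {r : R} {x y : a → R} {u v : b → R} {z : c → R}
    (hx : x = B *ᵥ (x + r • y) + C *ᵥ u + (if p then 0 else D *ᵥ x + T *ᵥ z))
    (hu : u = v + K *ᵥ x) :
    x = G⁻¹ *ᵥ (r • B *ᵥ y + C *ᵥ v) + (if p then 0 else (G⁻¹ * T) *ᵥ z) := by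
  let _ := hG.invertible
  have hGx : G *ᵥ x = r • B *ᵥ y + C *ᵥ v + (if p then 0 else T *ᵥ z) := by
    rw [hGdef]
    simp only [sub_mulVec, one_mulVec, ← mulVec_mulVec]
    nth_rewrite 1 [hx]
    rw [hu]
    split_ifs <;> simp only [zero_mulVec, mulVec_add, mulVec_smul] <;> abel
  rw [← inv_mulVec_eq_vec hGx.symm, mulVec_add]
  split_ifs <;> simp [mulVec_mulVec]

end BlockElimination

namespace OneSSystem

variable {N : ℕ} {π : ModelParams} {P : (j : ℕ) → ℕ → Fin (N - j) → ℝ} {n : ℕ}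

theorem factorialMoment_zero_eq (hP : OneSSystem N π P) (hn : 1 ≤ n) {a b : Fin (N - 0) → ℝ}
    (ha : HasFactorialMoment (P 0) n a) (hb : HasFactorialMoment (P 0) (n - 1) b) :
    a = (1 - Cm0 N π 0)⁻¹ *ᵥ (Bm N π 0 *ᵥ (a + (n : ℝ) • b)) := by
  refine ha.unique ?_
  convert (ha.ite_zero_mulVec_pred hn hb (Bm N π 0) (pS N π 0)).mulVec (1 - Cm0 N π 0)⁻¹ using 1
  exact funext hP.2.1

theorem factorialMoment_succ_eq (hP : OneSSystem N π P) (hn : 1 ≤ n) {j : ℕ}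
    (hj : j + 1 ≤ N - 1) {u : Fin (N - j) → ℝ} {x y : Fin (N - (j + 1)) → ℝ}
    {z : Fin (N - (j + 2)) → ℝ}
    (hu : HasFactorialMoment (P j) n u) (hx : HasFactorialMoment (P (j + 1)) n x)
    (hy : HasFactorialMoment (P (j + 1)) (n - 1) y)
    (hz : j + 1 ≠ N - 1 → HasFactorialMoment (P (j + 2)) n z) :
    x = Bm N π (j + 1) *ᵥ (x + (n : ℝ) • y) + Cm1 N π (j + 1) *ᵥ u
      + (if j + 1 = N - 1 then 0 else Cm0 N π (j + 1) *ᵥ x + Cm2 N π (j + 1) *ᵥ z) := by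
  refine hx.unique ?_
  have hcoupling : HasFactorialMoment (fun s => if j + 1 = N - 1 then 0 else
      Cm0 N π (j + 1) *ᵥ P (j + 1) s + Cm2 N π (j + 1) *ᵥ P (j + 2) s) n
      (if j + 1 = N - 1 then 0 else Cm0 N π (j + 1) *ᵥ x + Cm2 N π (j + 1) *ᵥ z) := by
    split_ifs with hlast
    · simp [HasFactorialMoment]
    · exact (hx.mulVec _).add ((hz hlast).mulVec _)
  convert ((hx.ite_zero_mulVec_pred hn hy (Bm N π (j + 1)) (pS N π (j + 1))).add
    (hu.mulVec (Cm1 N π (j + 1)))).add hcoupling using 1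
  exact funext fun s => hP.2.2 j s hj

end OneSSystem

theorem oneS_factorial_moments_general
    (N : ℕ) (π : ModelParams)
    (P : (j : ℕ) → ℕ → Fin (N - j) → ℝ)
    (hP : OneSSystem N π P)
    (n : ℕ) (hn : 1 ≤ n)
    (φ : ℕ → (j : ℕ) → Fin (N - j) → ℝ)
    (hφ : ∀ k : ℕ, k ≤ n → ∀ j : ℕ, j ≤ N - 1 → ∀ i : Fin (N - j),
      HasSum (fun s : ℕ => ((s.descFactorial k : ℕ) : ℝ) * P j s i) (φ k j i))
    (hinv : IsUnit (1 - Cm0 N π 0 - Bm N π 0))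
    (G : (j : ℕ) → Matrix (Fin (N - j)) (Fin (N - j)) ℝ)
    (hG1 : G 1 = 1 - Bm N π 1 - (if 1 = N - 1 then 0 else Cm0 N π 1))
    (hGrec : ∀ j : ℕ, 1 ≤ j → j + 1 ≤ N - 1 →
      G (j + 1) = 1 - Bm N π (j + 1) - (if j + 1 = N - 1 then 0 else Cm0 N π (j + 1))
        - (show Matrix (Fin (N - (j + 1))) (Fin (N - j)) ℝ from Cm1 N π (j + 1))
            * (G j)⁻¹ * Cm2 N π j)
    (hGinv : ∀ j : ℕ, 1 ≤ j → j ≤ N - 1 → IsUnit (G j))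
    (g : (j : ℕ) → Fin (N - j) → ℝ)
    (hg1 : g 1 = (G 1)⁻¹.mulVec
      ((n : ℝ) • (Bm N π 1).mulVec (φ (n - 1) 1) + (Cm1 N π 1).mulVec (φ n 0)))
    (hgrec : ∀ j : ℕ, 1 ≤ j → j + 1 ≤ N - 1 →
      g (j + 1) = (G (j + 1))⁻¹.mulVec
        ((n : ℝ) • (Bm N π (j + 1)).mulVec (φ (n - 1) (j + 1))
          + (Cm1 N π (j + 1)).mulVec (g j))) :
    φ n 0 = (n : ℝ) • ((1 - Cm0 N π 0 - Bm N π 0)⁻¹ * Bm N π 0).mulVec (φ (n - 1) 0) ∧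
    ∀ j : ℕ, 1 ≤ j → j ≤ N - 1 →
      φ n j = g j
        + (if j = N - 1 then 0 else ((G j)⁻¹ * Cm2 N π j).mulVec (φ n (j + 1))) := by
  have hΦ : ∀ k ≤ n, ∀ j ≤ N - 1, HasFactorialMoment (P j) k (φ k j) := fun k hk j hj =>
    Pi.hasSum.mpr fun i => by simpa using hφ k hk j hj i
  have hΦn := hΦ n le_rfl
  have hΦpred := hΦ (n - 1) (Nat.sub_le n 1)
  have hmoment (j : ℕ) (hj : j + 1 ≤ N - 1) := hP.factorialMoment_succ_eq hn hj
    (hΦn j (by omega)) (hΦn (j + 1) hj) (hΦpred (j + 1) hj) fun _ => hΦn (j + 2) (by omega)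
  refine ⟨Matrix.eq_smul_inv_mul_mulVec_of_eq hP.1 hinv
    (hP.factorialMoment_zero_eq hn (hΦn 0 (Nat.zero_le _)) (hΦpred 0 (Nat.zero_le _))), ?_⟩
  intro j hj
  induction j, hj using Nat.le_induction with
  | base =>
    intro hN
    rw [hg1]
    exact Matrix.eq_inv_mulVec_of_block_eq _ (hGinv 1 le_rfl hN)
      (by rw [hG1, Matrix.mul_zero, sub_zero]) (hmoment 0 hN) (K := 0) (v := φ n 0) (by simp)
  | succ j hj ih =>
    intro hjN
    have hprev := ih (by omega)
    rw [if_neg (by omega)] at hprev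
    rw [hgrec j hj hjN]
    exact Matrix.eq_inv_mulVec_of_block_eq _ (hGinv (j + 1) (by omega) hjN)
      (by rw [hGrec j hj hjN, Matrix.mul_assoc]) (hmoment j hjN) hprev

/-- **Corollary 1 of the paper.** Recursive computation of the factorial
moments `φ⁽ⁿ⁾_j = Σ_s s(s−1)⋯(s−n+1) P_j(s)` of a nonnegative `1S` family:
`φ⁽ⁿ⁾_0 = n (I − C₀(0) − B₀)⁻¹ B₀ φ⁽ⁿ⁻¹⁾_0`, and for `1 ≤ j ≤ N−1`
`φ⁽ⁿ⁾_j = g⁽ⁿ⁾_j + (1−δ_{j,N−1}) G_j⁻¹ C_{j+1}(2) φ⁽ⁿ⁾_{j+1}`. -/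
theorem oneS_factorial_moments
    (N : ℕ) (hN : 2 ≤ N) (π : ModelParams) (hπ : π.Valid)
    (P : (j : ℕ) → ℕ → Fin (N - j) → ℝ)
    (hP : OneSSystem N π P)
    (hPnn : ∀ j : ℕ, j ≤ N - 1 → ∀ (s : ℕ) (i : Fin (N - j)), 0 ≤ P j s i)
    (n : ℕ) (hn : 1 ≤ n)
    (φ : ℕ → (j : ℕ) → Fin (N - j) → ℝ)
    (hφ : ∀ k : ℕ, k ≤ n → ∀ j : ℕ, j ≤ N - 1 → ∀ i : Fin (N - j),
      HasSum (fun s : ℕ => ((s.descFactorial k : ℕ) : ℝ) * P j s i) (φ k j i))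
    (hinv : IsUnit (1 - Cm0 N π 0 - Bm N π 0))
    (G : (j : ℕ) → Matrix (Fin (N - j)) (Fin (N - j)) ℝ)
    (hG1 : G 1 = 1 - Bm N π 1 - (if 1 = N - 1 then 0 else Cm0 N π 1))
    (hGrec : ∀ j : ℕ, 1 ≤ j → j + 1 ≤ N - 1 →
      G (j + 1) = 1 - Bm N π (j + 1) - (if j + 1 = N - 1 then 0 else Cm0 N π (j + 1))
        - (show Matrix (Fin (N - (j + 1))) (Fin (N - j)) ℝ from Cm1 N π (j + 1))
            * (G j)⁻¹ * Cm2 N π j)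
    (hGinv : ∀ j : ℕ, 1 ≤ j → j ≤ N - 1 → IsUnit (G j))
    (g : (j : ℕ) → Fin (N - j) → ℝ)
    (hg1 : g 1 = (G 1)⁻¹.mulVec
      ((n : ℝ) • (Bm N π 1).mulVec (φ (n - 1) 1) + (Cm1 N π 1).mulVec (φ n 0)))
    (hgrec : ∀ j : ℕ, 1 ≤ j → j + 1 ≤ N - 1 →
      g (j + 1) = (G (j + 1))⁻¹.mulVec
        ((n : ℝ) • (Bm N π (j + 1)).mulVec (φ (n - 1) (j + 1))
          + (Cm1 N π (j + 1)).mulVec (g j))) :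
    φ n 0 = (n : ℝ) • ((1 - Cm0 N π 0 - Bm N π 0)⁻¹ * Bm N π 0).mulVec (φ (n - 1) 0) ∧
    ∀ j : ℕ, 1 ≤ j → j ≤ N - 1 →
      φ n j = g j
        + (if j = N - 1 then 0 else ((G j)⁻¹ * Cm2 N π j).mulVec (φ n (j + 1))) :=
  oneS_factorial_moments_general N π P hP n hn φ hφ hinv G hG1 hGrec hGinv g hg1 hgrec
end
end

section
/- Let {P_j(s)} be a 1S family and let PR_j(s,0) ∈ ℝ^{N−j+1} (1 ≤ j ≤ N, s ∈ ℕ) satisfy the (·,0)-system. Assume I_N − D_1(0) is invertible, define HR_2 = I_{N−1} − (1−δ_{2,N})D_2(0) and, for 3 ≤ j ≤ N, HR_j = I_{N−j+1} − (1−δ_{j,N})D_j(0) − D_{j−1}(1)·HR_{j−1}^{−1}·D_j(2), and assume each HR_j (2 ≤ j ≤ N) is invertible. For s ∈ ℕ define hR_2(s,0) = HR_2^{−1}·(δ_{s,0}pR_2 + (1−δ_{s,0})E_2·P_1(s−1) + D_1(1)·PR_1(s,0)) and, for 3 ≤ j ≤ N, hR_j(s,0) = HR_j^{−1}·(δ_{s,0}pR_j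 + (1−δ_{s,0})E_j·P_{j−1}(s−1) + D_{j−1}(1)·hR_{j−1}(s,0)). Then for every s ∈ ℕ: PR_1(s,0) = (I_N − D_1(0))^{−1}·(δ_{s,0}pR_1 + (1−δ_{s,0})E_1·P_0(s−1)), and for 2 ≤ j ≤ N: PR_j(s,0) = hR_j(s,0) + (1−δ_{j,N})·HR_j^{−1}·D_{j+1}(2)·PR_{j+1}(s,0). -/
open Matrix

noncomputable section

/-!
Block Gaussian elimination down the chain `j = 1, …, N`. The equation for block `j` couples
`PR_j` only with `PR_{j-1}` and `PR_{j+1}`. Once `PR_{j-1} = hR_{j-1} + HR_{j-1}⁻¹ D_j(2) PR_j`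
is known, substituting it leaves `HR_j PR_j = (forcing + D_{j-1}(1) hR_{j-1}) + D_{j+1}(2) PR_{j+1}`
with `HR_j = I - D_j(0) - D_{j-1}(1) HR_{j-1}⁻¹ D_j(2)`, a Schur complement, and inverting `HR_j`
gives the next block.
-/

theorem Matrix.eq_inv_mulVec_of_block_elimination {m n R : Type*} [Fintype m] [Fintype n]
    [DecidableEq m] [CommRing R] {A H : Matrix m m R} {C : Matrix m n R} {G : Matrix n m R}
    (hH : IsUnit H) (hHdef : H = 1 - A - C * G) {x b d : m → R} {x' h : n → R}
    (hx' : x' = h + G *ᵥ x) (hx : x = b + C *ᵥ x' + (A *ᵥ x + d)) :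
    x = H⁻¹ *ᵥ (b + C *ᵥ h) + H⁻¹ *ᵥ d := by
  have hHx : H *ᵥ x = b + C *ᵥ h + d := by
    subst hx'
    rw [hHdef, sub_mulVec, sub_mulVec, one_mulVec, ← mulVec_mulVec]
    nth_rewrite 1 [hx]
    simp only [mulVec_add]
    abel
  have := hH.invertible
  rw [← mulVec_add]
  exact (inv_mulVec_eq_vec hHx.symm).symm

theorem ite_zero_mulVec_add {m n R : Type*} [Fintype m] [NonUnitalNonAssocSemiring R] (p : Prop)
    [Decidable p] (A : Matrix n m R) (x : m → R) (v : n → R) :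
    (if p then 0 else A *ᵥ x + v) = (if p then 0 else A) *ᵥ x + (if p then 0 else v) := by
  split_ifs <;> simp

theorem mulVec_ite_zero_mulVec {l m n R : Type*} [Fintype m] [Fintype n] [NonUnitalSemiring R]
    (p : Prop) [Decidable p] (H : Matrix l m R) (D : Matrix m n R) (y : n → R) :
    H *ᵥ (if p then 0 else D *ᵥ y) = if p then 0 else (H * D) *ᵥ y := by
  split_ifs <;> simp [mulVec_mulVec]

namespace RZeroSystem

variable {N : ℕ} {π : ModelParams} {P : (j : ℕ) → ℕ → Fin (N - j) → ℝ}
  {PR : (j : ℕ) → ℕ → Fin (N - j + 1) → ℝ}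

theorem first_block (hPR : RZeroSystem N π P PR) (hD1inv : IsUnit (1 - Dm0 N π 1)) (s : ℕ) :
    PR 1 s = (1 - Dm0 N π 1)⁻¹ *ᵥ
      (if s = 0 then pR N π 1 else Em N π 1 *ᵥ P 0 (s - 1)) := by
  have := hD1inv.invertible
  refine (inv_mulVec_eq_vec ?_).symm
  rw [sub_mulVec, one_mulVec]
  nth_rewrite 1 [hPR.1 s]
  abel

theorem next_block (hPR : RZeroSystem N π P PR) {j s : ℕ} (hj : 1 ≤ j) (hjN : j + 1 ≤ N)
    {H : Matrix (Fin (N - (j + 1) + 1)) (Fin (N - (j + 1) + 1)) ℝ} (hH : IsUnit H)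
    {G : Matrix (Fin (N - j + 1)) (Fin (N - (j + 1) + 1)) ℝ} {h : Fin (N - j + 1) → ℝ}
    (hHdef : H = 1 - (if j + 1 = N then 0 else Dm0 N π (j + 1))
      - (show Matrix (Fin (N - (j + 1) + 1)) (Fin (N - j + 1)) ℝ from Dm1 N π (j + 1)) * G)
    (hprev : PR j s = h + G *ᵥ PR (j + 1) s) :
    PR (j + 1) s = H⁻¹ *ᵥ
        ((if s = 0 then pR N π (j + 1) else Em N π (j + 1) *ᵥ P j (s - 1))
          + Dm1 N π (j + 1) *ᵥ h)
      + (if j + 1 = N then 0 else (H⁻¹ * Dm2 N π (j + 1)) *ᵥ PR (j + 2) s) := by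
  rw [← mulVec_ite_zero_mulVec]
  refine Matrix.eq_inv_mulVec_of_block_elimination hH hHdef hprev ?_
  rw [← ite_zero_mulVec_add]
  exact hPR.2 j s hj hjN

end RZeroSystem

theorem rZero_block_elimination_general
    (N : ℕ) (hN : 2 ≤ N) (π : ModelParams)
    (P : (j : ℕ) → ℕ → Fin (N - j) → ℝ)
    (PR : (j : ℕ) → ℕ → Fin (N - j + 1) → ℝ)
    (hPR : RZeroSystem N π P PR)
    (hD1inv : IsUnit (1 - Dm0 N π 1))
    (HR : (j : ℕ) → Matrix (Fin (N - j + 1)) (Fin (N - j + 1)) ℝ)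
    (hHR2 : HR 2 = 1 - (if 2 = N then 0 else Dm0 N π 2))
    (hHRrec : ∀ j : ℕ, 2 ≤ j → j + 1 ≤ N →
      HR (j + 1) = 1 - (if j + 1 = N then 0 else Dm0 N π (j + 1))
        - (show Matrix (Fin (N - (j + 1) + 1)) (Fin (N - j + 1)) ℝ from Dm1 N π (j + 1))
            * (HR j)⁻¹ * Dm2 N π j)
    (hHRinv : ∀ j : ℕ, 2 ≤ j → j ≤ N → IsUnit (HR j))
    (hv : (j : ℕ) → ℕ → Fin (N - j + 1) → ℝ)
    (hv2 : ∀ s : ℕ, hv 2 s = (HR 2)⁻¹.mulVec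
      ((if s = 0 then pR N π 2 else (Em N π 2).mulVec (P 1 (s - 1)))
        + (Dm1 N π 2).mulVec (PR 1 s)))
    (hvrec : ∀ j s : ℕ, 2 ≤ j → j + 1 ≤ N →
      hv (j + 1) s = (HR (j + 1))⁻¹.mulVec
        ((if s = 0 then pR N π (j + 1) else (Em N π (j + 1)).mulVec (P j (s - 1)))
          + (Dm1 N π (j + 1)).mulVec (hv j s))) :
    (∀ s : ℕ, PR 1 s = (1 - Dm0 N π 1)⁻¹.mulVec
      (if s = 0 then pR N π 1 else (Em N π 1).mulVec (P 0 (s - 1)))) ∧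
    ∀ s j : ℕ, 2 ≤ j → j ≤ N →
      PR j s = hv j s
        + (if j = N then 0 else ((HR j)⁻¹ * Dm2 N π j).mulVec (PR (j + 1) s)) := by
  refine ⟨hPR.first_block hD1inv, fun s j hj => ?_⟩
  induction j, hj using Nat.le_induction with
  | base =>
    intro h2N
    -- `PR 1` plays the role of `hR_1`, with no coupling to `PR 2`.
    rw [hv2]
    exact hPR.next_block le_rfl hN (hHRinv 2 le_rfl h2N) (G := 0) (by simpa using hHR2)
      (by simp)
  | succ j hj ih =>
    intro hjN
    have hprev := ih (by omega)
    rw [if_neg (by omega)] at hprev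
    rw [hvrec j s hj hjN]
    exact hPR.next_block (by omega) hjN (hHRinv (j + 1) (by omega) hjN)
      (by rw [hHRrec j hj hjN, Matrix.mul_assoc]) hprev

/-- **Theorem 2 of the paper.** Block-Gaussian elimination solution of the
`(·,0)`-system coupled with a `1S` family:
`P_{1,1_R}(s,0) = (I − D₁(0))⁻¹(δ_{s,0} p_{1,1_R} + (1−δ_{s,0}) E₁ P_{0,1_S}(s−1))` and
`P_{j,1_R}(s,0) = h_{j,1_R}(s,0) + (1−δ_{j,N}) H_{j,1_R}⁻¹ D_{j+1}(2) P_{j+1,1_R}(s,0)`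
for `2 ≤ j ≤ N`. -/
theorem rZero_block_elimination
    (N : ℕ) (hN : 2 ≤ N) (π : ModelParams) (hπ : π.Valid)
    (P : (j : ℕ) → ℕ → Fin (N - j) → ℝ)
    (hP : OneSSystem N π P)
    (PR : (j : ℕ) → ℕ → Fin (N - j + 1) → ℝ)
    (hPR : RZeroSystem N π P PR)
    (hD1inv : IsUnit (1 - Dm0 N π 1))
    (HR : (j : ℕ) → Matrix (Fin (N - j + 1)) (Fin (N - j + 1)) ℝ)
    (hHR2 : HR 2 = 1 - (if 2 = N then 0 else Dm0 N π 2))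
    (hHRrec : ∀ j : ℕ, 2 ≤ j → j + 1 ≤ N →
      HR (j + 1) = 1 - (if j + 1 = N then 0 else Dm0 N π (j + 1))
        - (show Matrix (Fin (N - (j + 1) + 1)) (Fin (N - j + 1)) ℝ from Dm1 N π (j + 1))
            * (HR j)⁻¹ * Dm2 N π j)
    (hHRinv : ∀ j : ℕ, 2 ≤ j → j ≤ N → IsUnit (HR j))
    (hv : (j : ℕ) → ℕ → Fin (N - j + 1) → ℝ)
    (hv2 : ∀ s : ℕ, hv 2 s = (HR 2)⁻¹.mulVec
      ((if s = 0 then pR N π 2 else (Em N π 2).mulVec (P 1 (s - 1)))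
        + (Dm1 N π 2).mulVec (PR 1 s)))
    (hvrec : ∀ j s : ℕ, 2 ≤ j → j + 1 ≤ N →
      hv (j + 1) s = (HR (j + 1))⁻¹.mulVec
        ((if s = 0 then pR N π (j + 1) else (Em N π (j + 1)).mulVec (P j (s - 1)))
          + (Dm1 N π (j + 1)).mulVec (hv j s))) :
    (∀ s : ℕ, PR 1 s = (1 - Dm0 N π 1)⁻¹.mulVec
      (if s = 0 then pR N π 1 else (Em N π 1).mulVec (P 0 (s - 1)))) ∧
    ∀ s j : ℕ, 2 ≤ j → j ≤ N →
      PR j s = hv j s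
        + (if j = N then 0 else ((HR j)⁻¹ * Dm2 N π j).mulVec (PR (j + 1) s)) :=
  rZero_block_elimination_general N hN π P PR hPR hD1inv HR hHR2 hHRrec hHRinv hv hv2 hvrec
end
end

section
/- Let {P_j(s)} be a 1S family and {PR_j(s,0)} satisfy the (·,0)-system, all with nonnegative entries. Fix n ≥ 1 and assume that for each 0 ≤ k ≤ n the factorial-moment vectors φ^{(k)}_j := Σ_{s=0}^∞ s(s−1)⋯(s−k+1)·P_j(s) (0 ≤ j ≤ N−1) and φR^{(k)}_j := Σ_{s=0}^∞ s(s−1)⋯(s−k+1)·PR_j(s,0) (1 ≤ j ≤ N) converge entrywise. Assume I_N − D_1(0) is invertible; define HR_2 = I_{N−1} − (1−δ_{2,N})D_2(0) and, for 3 ≤ j ≤ N, HR_j = I_{N−j+1} − (1−δ_{j,N})D_j(0) − D_{j−1}(1)·HR_{j−1}^{−1}·D_j(2), assumed invertible. Then: φR^{(n)}_1 = (I_N − D_1(0))^{−1}·E_1·(φ^{(n)}_0 + n·φ^{(n−1)}_0), and for 2 ≤ j ≤ N: φR^{(n)}_j = gR^{(n)}_j + (1−δ_{j,N})·HR_j^{−1}·D_{j+1}(2)·φR^{(n)}_{j+1},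 where gR^{(n)}_2 = HR_2^{−1}·(E_2·(n·φ^{(n−1)}_1 + φ^{(n)}_1) + D_1(1)·φR^{(n)}_1) and, for 3 ≤ j ≤ N, gR^{(n)}_j = HR_j^{−1}·(E_j·(n·φ^{(n−1)}_{j−1} + φ^{(n)}_{j−1}) + D_{j−1}(1)·gR^{(n)}_{j−1}). -/
open Matrix

noncomputable section

private lemma descFact_succ_left (t k : ℕ) :
    (t+1).descFactorial (k+1) = t.descFactorial (k+1) + (k+1) * t.descFactorial k := by
  rcases le_or_gt k t with h | h
  · rw [Nat.succ_descFactorial_succ, Nat.descFactorial_succ,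
      show t + 1 = (t - k) + (k + 1) by omega, add_mul]
  · rw [Nat.succ_descFactorial_succ, Nat.descFactorial_eq_zero_iff_lt.mpr h,
      Nat.descFactorial_eq_zero_iff_lt.mpr (show t < k+1 by omega)]
    simp

private lemma hasSum_mulVec_entry {κ ι : Type*} [Fintype ι] (A : Matrix κ ι ℝ)
    (f : ℕ → ι → ℝ) (g : ι → ℝ) (h : ∀ l, HasSum (fun s => f s l) (g l)) (i : κ) :
    HasSum (fun s => A.mulVec (f s) i) (A.mulVec g i) := by
  simpa [Matrix.mulVec, dotProduct] using
    hasSum_sum (f := fun l s => A i l * f s l) (s := Finset.univ) (fun l _ => (h l).mul_left _)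

private lemma hasSum_scaled_mulVec {κ ι : Type*} [Fintype ι] (n : ℕ) (A : Matrix κ ι ℝ)
    (Pv : ℕ → ι → ℝ) (φv : ι → ℝ)
    (h : ∀ l, HasSum (fun s => ((s.descFactorial n : ℕ) : ℝ) * Pv s l) (φv l)) (i : κ) :
    HasSum (fun s => ((s.descFactorial n : ℕ) : ℝ) * A.mulVec (Pv s) i) (A.mulVec φv i) := by
  have h2 := hasSum_mulVec_entry A (fun s l => ((s.descFactorial n : ℕ) : ℝ) * Pv s l) φv h i
  convert h2 using 2 with s
  simp [Matrix.mulVec, dotProduct, Finset.mul_sum, mul_left_comm]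

private lemma hasSum_scaled_ite {κ ι : Type*} [Fintype ι] (n : ℕ) (hn : 1 ≤ n) (A : Matrix κ ι ℝ)
    (Pv : ℕ → ι → ℝ) (φn φn1 : ι → ℝ)
    (h1 : ∀ l, HasSum (fun t => ((t.descFactorial n : ℕ) : ℝ) * Pv t l) (φn l))
    (h2 : ∀ l, HasSum (fun t => ((t.descFactorial (n-1) : ℕ) : ℝ) * Pv t l) (φn1 l))
    (v0 : κ → ℝ) (i : κ) :
    HasSum (fun s => ((s.descFactorial n : ℕ) : ℝ) *
      (if s = 0 then v0 else A.mulVec (Pv (s-1))) i) (A.mulVec (φn + (n : ℝ) • φn1) i) := by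
  obtain ⟨n', rfl⟩ : ∃ n', n = n' + 1 := ⟨n - 1, by omega⟩
  have key : ∀ l, HasSum (fun t => (((t+1).descFactorial (n'+1) : ℕ) : ℝ) * Pv t l)
      ((φn + ((n'+1 : ℕ) : ℝ) • φn1) l) := by
    intro l
    have h := (h1 l).add ((h2 l).mul_left ((n'+1 : ℕ) : ℝ))
    have he : (fun t => (((t+1).descFactorial (n'+1) : ℕ) : ℝ) * Pv t l)
        = fun t => ((t.descFactorial (n'+1) : ℕ) : ℝ) * Pv t l
          + ((n'+1 : ℕ) : ℝ) * (((t.descFactorial (n'+1-1) : ℕ) : ℝ) * Pv t l) := by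
      funext t
      rw [descFact_succ_left]
      push_cast
      ring
    rw [he]
    convert h using 1
    rfl
  have h3 := hasSum_mulVec_entry A _ _ key i
  have h4 : HasSum (fun t => (((t+1).descFactorial (n'+1) : ℕ) : ℝ) * A.mulVec (Pv t) i)
      (A.mulVec (φn + ((n'+1 : ℕ) : ℝ) • φn1) i) := by
    convert h3 using 2 with t
    simp [Matrix.mulVec, dotProduct, Finset.mul_sum, mul_left_comm]
  set F : ℕ → ℝ := fun s => ((s.descFactorial (n'+1) : ℕ) : ℝ) *
      (if s = 0 then v0 else A.mulVec (Pv (s-1))) i with hF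
  have hFs : (fun t => (((t+1).descFactorial (n'+1) : ℕ) : ℝ) * A.mulVec (Pv t) i)
      = fun t => F (t + 1) := by
    funext t; simp [hF]
  rw [hFs] at h4
  have h5 := (hasSum_nat_add_iff 1).mp h4
  simpa [hF] using h5

private lemma solve_lin {κ : Type*} [Fintype κ] [DecidableEq κ] (H : Matrix κ κ ℝ)
    (hH : IsUnit H) (x y : κ → ℝ) (h : H.mulVec x = y) : x = H⁻¹.mulVec y := by
  rw [← h, Matrix.mulVec_mulVec,
    Matrix.nonsing_inv_mul _ ((Matrix.isUnit_iff_isUnit_det H).mp hH), Matrix.one_mulVec]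

/-- **Corollary 2(i) of the paper.** Recursive computation of the
factorial moments `φR⁽ⁿ⁾_j = Σ_s s(s−1)⋯(s−n+1) P_{j,1_R}(s,0)`:
`φR⁽ⁿ⁾_1 = (I − D₁(0))⁻¹ E₁ (φ⁽ⁿ⁾_0 + n φ⁽ⁿ⁻¹⁾_0)` and, for `2 ≤ j ≤ N`,
`φR⁽ⁿ⁾_j = gR⁽ⁿ⁾_j + (1−δ_{j,N}) H_{j,1_R}⁻¹ D_{j+1}(2) φR⁽ⁿ⁾_{j+1}`. -/
theorem rZero_factorial_moments
    (N : ℕ) (hN : 2 ≤ N) (π : ModelParams) (hπ : π.Valid)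
    (P : (j : ℕ) → ℕ → Fin (N - j) → ℝ)
    (hP : OneSSystem N π P)
    (PR : (j : ℕ) → ℕ → Fin (N - j + 1) → ℝ)
    (hPR : RZeroSystem N π P PR)
    (hPnn : ∀ j : ℕ, j ≤ N - 1 → ∀ (s : ℕ) (i : Fin (N - j)), 0 ≤ P j s i)
    (hPRnn : ∀ j : ℕ, 1 ≤ j → j ≤ N → ∀ (s : ℕ) (i : Fin (N - j + 1)), 0 ≤ PR j s i)
    (n : ℕ) (hn : 1 ≤ n)
    (φ : ℕ → (j : ℕ) → Fin (N - j) → ℝ)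
    (hφ : ∀ k : ℕ, k ≤ n → ∀ j : ℕ, j ≤ N - 1 → ∀ i : Fin (N - j),
      HasSum (fun s : ℕ => ((s.descFactorial k : ℕ) : ℝ) * P j s i) (φ k j i))
    (φR : ℕ → (j : ℕ) → Fin (N - j + 1) → ℝ)
    (hφR : ∀ k : ℕ, k ≤ n → ∀ j : ℕ, 1 ≤ j → j ≤ N → ∀ i : Fin (N - j + 1),
      HasSum (fun s : ℕ => ((s.descFactorial k : ℕ) : ℝ) * PR j s i) (φR k j i))
    (hD1inv : IsUnit (1 - Dm0 N π 1))
    (HR : (j : ℕ) → Matrix (Fin (N - j + 1)) (Fin (N - j + 1)) ℝ)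
    (hHR2 : HR 2 = 1 - (if 2 = N then 0 else Dm0 N π 2))
    (hHRrec : ∀ j : ℕ, 2 ≤ j → j + 1 ≤ N →
      HR (j + 1) = 1 - (if j + 1 = N then 0 else Dm0 N π (j + 1))
        - (show Matrix (Fin (N - (j + 1) + 1)) (Fin (N - j + 1)) ℝ from Dm1 N π (j + 1))
            * (HR j)⁻¹ * Dm2 N π j)
    (hHRinv : ∀ j : ℕ, 2 ≤ j → j ≤ N → IsUnit (HR j))
    (gR : (j : ℕ) → Fin (N - j + 1) → ℝ)
    (hg2 : gR 2 = (HR 2)⁻¹.mulVec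
      ((Em N π 2).mulVec ((n : ℝ) • φ (n - 1) 1 + φ n 1) + (Dm1 N π 2).mulVec (φR n 1)))
    (hgrec : ∀ j : ℕ, 2 ≤ j → j + 1 ≤ N →
      gR (j + 1) = (HR (j + 1))⁻¹.mulVec
        ((Em N π (j + 1)).mulVec ((n : ℝ) • φ (n - 1) j + φ n j)
          + (Dm1 N π (j + 1)).mulVec (gR j))) :
    φR n 1 = ((1 - Dm0 N π 1)⁻¹ * Em N π 1).mulVec (φ n 0 + (n : ℝ) • φ (n - 1) 0) ∧
    ∀ j : ℕ, 2 ≤ j → j ≤ N →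
      φR n j = gR j
        + (if j = N then 0 else ((HR j)⁻¹ * Dm2 N π j).mulVec (φR n (j + 1))) := by
  obtain ⟨hR1, hRrec⟩ := hPR
  -- moment equation at level 1
  have hψ0 : ∀ l, HasSum (fun t => ((t.descFactorial n : ℕ) : ℝ) * P 0 t l) (φ n 0 l) :=
    hφ n le_rfl 0 (by omega)
  have hψ0' : ∀ l, HasSum (fun t => ((t.descFactorial (n-1) : ℕ) : ℝ) * P 0 t l)
      (φ (n-1) 0 l) := hφ (n-1) (by omega) 0 (by omega)
  have hA1 : ∀ i, HasSum (fun s => ((s.descFactorial n : ℕ) : ℝ) * PR 1 s i) (φR n 1 i) :=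
    hφR n le_rfl 1 le_rfl (by omega)
  have me1 : φR n 1 = (Dm0 N π 1).mulVec (φR n 1)
      + (Em N π 1).mulVec (φ n 0 + (n : ℝ) • φ (n-1) 0) := by
    funext i
    have e1 := hasSum_scaled_mulVec n (Dm0 N π 1) (fun s => PR 1 s) (φR n 1) hA1 i
    have e2 := hasSum_scaled_ite n hn (Em N π 1) (P 0) (φ n 0) (φ (n-1) 0) hψ0 hψ0'
      (pR N π 1) i
    have rhs := e1.add e2
    have efun : (fun s => ((s.descFactorial n : ℕ) : ℝ) * PR 1 s i)
        = fun s => ((s.descFactorial n : ℕ) : ℝ) * (Dm0 N π 1).mulVec (PR 1 s) i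
          + ((s.descFactorial n : ℕ) : ℝ)
            * (if s = 0 then pR N π 1 else (Em N π 1).mulVec (P 0 (s-1))) i := by
      funext s
      conv_lhs => rw [hR1 s]
      simp [Pi.add_apply, mul_add]
    rw [← efun] at rhs
    exact (hA1 i).unique rhs
  -- moment equations at higher levels
  have meJ : ∀ j : ℕ, 1 ≤ j → j + 1 ≤ N →
      φR n (j+1) = (Em N π (j+1)).mulVec (φ n j + (n : ℝ) • φ (n-1) j)
        + (Dm1 N π (j+1)).mulVec (φR n j)
        + (if j + 1 = N then 0 else
            (Dm0 N π (j+1)).mulVec (φR n (j+1)) + (Dm2 N π (j+1)).mulVec (φR n (j+2))) := by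
    intro j hj1 hjN
    have hA : ∀ i, HasSum (fun s => ((s.descFactorial n : ℕ) : ℝ) * PR (j+1) s i)
        (φR n (j+1) i) := hφR n le_rfl (j+1) (by omega) hjN
    have hB : ∀ i, HasSum (fun s => ((s.descFactorial n : ℕ) : ℝ) * PR j s i) (φR n j i) :=
      hφR n le_rfl j hj1 (by omega)
    have hPn : ∀ l, HasSum (fun t => ((t.descFactorial n : ℕ) : ℝ) * P j t l) (φ n j l) :=
      hφ n le_rfl j (by omega)
    have hPn' : ∀ l, HasSum (fun t => ((t.descFactorial (n-1) : ℕ) : ℝ) * P j t l)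
        (φ (n-1) j l) := hφ (n-1) (by omega) j (by omega)
    funext i
    have e2 := hasSum_scaled_ite n hn (Em N π (j+1)) (P j) (φ n j) (φ (n-1) j) hPn hPn'
      (pR N π (j+1)) i
    have e3 := hasSum_scaled_mulVec n (Dm1 N π (j+1)) (PR j) (φR n j) hB i
    by_cases hN : j + 1 = N
    · have rhs := e2.add e3
      have efun : (fun s => ((s.descFactorial n : ℕ) : ℝ) * PR (j+1) s i)
          = fun s => ((s.descFactorial n : ℕ) : ℝ)
              * (if s = 0 then pR N π (j+1) else (Em N π (j+1)).mulVec (P j (s-1))) i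
            + ((s.descFactorial n : ℕ) : ℝ) * (Dm1 N π (j+1)).mulVec (PR j s) i := by
        funext s
        conv_lhs => rw [hRrec j s hj1 hjN]
        simp [if_pos hN, Pi.add_apply, mul_add]
      rw [← efun] at rhs
      have hval := (hA i).unique rhs
      rw [if_pos hN]
      simp only [Pi.add_apply, Pi.zero_apply, add_zero]
      exact hval
    · have hC : ∀ i, HasSum (fun s => ((s.descFactorial n : ℕ) : ℝ) * PR (j+2) s i)
          (φR n (j+2) i) := hφR n le_rfl (j+2) (by omega) (by omega)
      have e4 := hasSum_scaled_mulVec n (Dm0 N π (j+1)) (PR (j+1)) (φR n (j+1)) hA i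
      have e5 := hasSum_scaled_mulVec n (Dm2 N π (j+1)) (PR (j+2)) (φR n (j+2)) hC i
      have rhs := (e2.add e3).add (e4.add e5)
      have efun : (fun s => ((s.descFactorial n : ℕ) : ℝ) * PR (j+1) s i)
          = fun s => (((s.descFactorial n : ℕ) : ℝ)
              * (if s = 0 then pR N π (j+1) else (Em N π (j+1)).mulVec (P j (s-1))) i
            + ((s.descFactorial n : ℕ) : ℝ) * (Dm1 N π (j+1)).mulVec (PR j s) i)
            + (((s.descFactorial n : ℕ) : ℝ) * (Dm0 N π (j+1)).mulVec (PR (j+1) s) i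
              + ((s.descFactorial n : ℕ) : ℝ) * (Dm2 N π (j+1)).mulVec (PR (j+2) s) i) := by
        funext s
        conv_lhs => rw [hRrec j s hj1 hjN]
        simp only [if_neg hN, Pi.add_apply]
        ring
      rw [← efun] at rhs
      have hval := (hA i).unique rhs
      rw [if_neg hN]
      simp only [Pi.add_apply]
      exact hval
  constructor
  · have h1 : (1 - Dm0 N π 1).mulVec (φR n 1)
        = (Em N π 1).mulVec (φ n 0 + (n : ℝ) • φ (n-1) 0) := by
      rw [Matrix.sub_mulVec, Matrix.one_mulVec]
      nth_rewrite 1 [me1]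
      abel
    rw [solve_lin _ hD1inv _ _ h1, Matrix.mulVec_mulVec]
  · intro j hj2
    induction j, hj2 using Nat.le_induction with
    | base =>
      intro _
      have me : φR n 2 = (Em N π 2).mulVec (φ n 1 + (n : ℝ) • φ (n-1) 1)
          + (Dm1 N π 2).mulVec (φR n 1)
          + (if 2 = N then 0 else
              (Dm0 N π 2).mulVec (φR n 2) + (Dm2 N π 2).mulVec (φR n 3)) :=
        meJ 1 le_rfl (by omega)
      by_cases h2N : 2 = N
      · have me' := me
        rw [if_pos h2N, add_zero] at me'
        rw [if_pos h2N, add_zero, hg2, hHR2, if_pos h2N, sub_zero, inv_one,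
          Matrix.one_mulVec, me', add_comm ((n : ℝ) • φ (n-1) 1)]
      · have hH2 : IsUnit (HR 2) := hHRinv 2 le_rfl (by omega)
        have me' := me
        rw [if_neg h2N] at me'
        have key : (HR 2).mulVec (φR n 2)
            = (Em N π 2).mulVec (φ n 1 + (n : ℝ) • φ (n-1) 1)
              + (Dm1 N π 2).mulVec (φR n 1) + (Dm2 N π 2).mulVec (φR n 3) := by
          rw [hHR2, if_neg h2N, Matrix.sub_mulVec, Matrix.one_mulVec]
          nth_rewrite 1 [me']
          abel
        rw [if_neg h2N, solve_lin _ hH2 _ _ key, hg2, Matrix.mulVec_add,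
          add_comm ((n : ℝ) • φ (n-1) 1), Matrix.mulVec_mulVec]
    | succ j hj ih =>
      intro hjN1
      have hjne : j ≠ N := by omega
      have ih' : φR n j = gR j + ((HR j)⁻¹ * Dm2 N π j).mulVec (φR n (j+1)) := by
        have h := ih (by omega)
        rwa [if_neg hjne] at h
      have me := meJ j (by omega) hjN1
      have hHj1 : IsUnit (HR (j+1)) := hHRinv (j+1) (by omega) hjN1
      have hsub : (Dm1 N π (j+1)).mulVec (φR n j)
          = (Dm1 N π (j+1)).mulVec (gR j)
            + ((show Matrix (Fin (N - (j + 1) + 1)) (Fin (N - j + 1)) ℝ from Dm1 N π (j + 1))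
                * (HR j)⁻¹ * Dm2 N π j).mulVec (φR n (j+1)) := by
        rw [ih', Matrix.mulVec_add, Matrix.mulVec_mulVec, ← Matrix.mul_assoc]
      by_cases hN : j + 1 = N
      · have me' := me
        rw [if_pos hN, add_zero] at me'
        have key : (HR (j+1)).mulVec (φR n (j+1))
            = (Em N π (j+1)).mulVec (φ n j + (n : ℝ) • φ (n-1) j)
              + (Dm1 N π (j+1)).mulVec (gR j) := by
          rw [hHRrec j hj hjN1, if_pos hN, sub_zero, Matrix.sub_mulVec, Matrix.one_mulVec]
          nth_rewrite 1 [me']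
          rw [hsub]
          abel
        rw [if_pos hN, add_zero, hgrec j hj hjN1, add_comm ((n : ℝ) • φ (n-1) j)]
        exact solve_lin _ hHj1 _ _ key
      · have me' := me
        rw [if_neg hN] at me'
        have key : (HR (j+1)).mulVec (φR n (j+1))
            = (Em N π (j+1)).mulVec (φ n j + (n : ℝ) • φ (n-1) j)
              + (Dm1 N π (j+1)).mulVec (gR j)
              + (Dm2 N π (j+1)).mulVec (φR n (j+2)) := by
          rw [hHRrec j hj hjN1, if_neg hN, Matrix.sub_mulVec, Matrix.sub_mulVec,
            Matrix.one_mulVec]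
          nth_rewrite 1 [me']
          rw [hsub]
          abel
        rw [if_neg hN, solve_lin _ hHj1 _ _ key, hgrec j hj hjN1, Matrix.mulVec_add,
          add_comm ((n : ℝ) • φ (n-1) j), Matrix.mulVec_mulVec]
end
end

section
/- Let {PR_j(s,0)} satisfy the (·,0)-system (coupled with a 1S family) and {PR_j(s,r)}_{r≥1} satisfy the (·,r)-system, all with nonnegative entries. Fix n ≥ 0 and assume that for each 0 ≤ k ≤ n the vectors φR^{(k)}_j := Σ_{s=0}^∞ s(s−1)⋯(s−k+1)·PR_j(s,0) and ψ^{(k)}_j := Σ_{s≥0} Σ_{r≥1} s(s−1)⋯(s−k+1)·PR_j(s,r) converge entrywise for 1 ≤ j ≤ N. Define L_1 = I_N − D_1(0) and, for 2 ≤ j ≤ N, L_j = I_{N−j+1} − (1−δ_{j,N})D_j(0) − D_{j−1}(1)·L_{j−1}^{−1}·(F_{j−1} + (1−δ_{j,2})D_j(2)); assume each L_j is invertible. Then for 1 ≤ j ≤ N: ψ^{(n)}_j = l^{(n)}_j + (1−δ_{j,N})·L_j^{−1}·(F_j + (1−δ_{j,1})D_{j+1}(2))·ψ^{(n)}_{j+1},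 where l^{(n)}_1 = L_1^{−1}·(1−δ_{1,N})·F_1·φR^{(n)}_2 and, for 2 ≤ j ≤ N, l^{(n)}_j = L_j^{−1}·(D_{j−1}(1)·l^{(n)}_{j−1} + (1−δ_{j,N})·F_j·φR^{(n)}_{j+1}). -/
open Matrix

noncomputable section

/-! Multiplying the `(·,r)`-system by `s(s−1)⋯(s−n+1)` and summing over `s ≥ 0`, `r ≥ 1` gives
a block-tridiagonal linear system for the moments `ψ⁽ⁿ⁾_j`, except that the `F_j`-term, which
lowers `r` by one, collects `PR_{j+1}(s,r)` over all `r ≥ 0`, i.e. `φR⁽ⁿ⁾_{j+1} + ψ⁽ⁿ⁾_{j+1}`.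
Block forward elimination of this system, level by level in `j`, produces exactly the matrices
`L_j` and vectors `l⁽ⁿ⁾_j`. -/

theorem HasSum.add_of_snd_zero_of_snd_succ {M : Type*} [AddCommMonoid M] [TopologicalSpace M]
    [ContinuousAdd M] {f : ℕ × ℕ → M} {a b : M}
    (h0 : HasSum (fun s => f (s, 0)) a) (h1 : HasSum (fun p : ℕ × ℕ => f (p.1, p.2 + 1)) b) :
    HasSum f (a + b) := by
  have hinj0 : Function.Injective fun s : ℕ => (s, 0) := fun _ _ h => (Prod.ext_iff.1 h).1
  have hinj1 : Function.Injective fun p : ℕ × ℕ => (p.1, p.2 + 1) := by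
    rintro ⟨_, _⟩ ⟨_, _⟩ h
    simpa using h
  have hrange :
      Set.range (fun p : ℕ × ℕ => (p.1, p.2 + 1)) = (Set.range fun s : ℕ => (s, 0))ᶜ := by
    ext ⟨s, r⟩
    cases r <;> simp
  refine HasSum.add_compl ((hinj0.hasSum_range_iff).2 h0) ?_
  rw [← hrange]
  exact (hinj1.hasSum_range_iff).2 h1

theorem HasSum.matrix_mulVec {ι m n R : Type*} [Fintype n] [NonUnitalNonAssocSemiring R]
    [TopologicalSpace R] [IsTopologicalSemiring R] {f : ι → n → R} {a : n → R}
    (h : HasSum f a) (M : Matrix m n R) : HasSum (fun x => M *ᵥ f x) (M *ᵥ a) :=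
  Pi.hasSum.2 fun i => by
    simpa only [mulVec, dotProduct] using
      hasSum_sum fun k _ => (Pi.hasSum.1 h k).mul_left (M i k)

section Elimination

variable {a b c α : Type*} [Fintype a] [DecidableEq a] [Fintype b] [Fintype c] [CommRing α]

theorem Matrix.eq_inv_mulVec_of_eq_mulVec_add {A : Matrix a a α} (hA : IsUnit (1 - A))
    {x u : a → α} (h : x = A *ᵥ x + u) : x = (1 - A)⁻¹ *ᵥ u := by
  have hx : (1 - A) *ᵥ x = u := by
    rw [sub_mulVec, one_mulVec, sub_eq_iff_eq_add', ← h]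
  rw [← hx, mulVec_mulVec, nonsing_inv_mul _ ((isUnit_iff_isUnit_det _).1 hA), one_mulVec]

theorem Matrix.eliminate_first {A : Matrix a a α} {F : Matrix a c α} (hA : IsUnit (1 - A))
    {x φ : c → α} {x₁ : a → α} (h : x₁ = A *ᵥ x₁ + F *ᵥ (φ + x)) :
    x₁ = (1 - A)⁻¹ *ᵥ (F *ᵥ φ) + ((1 - A)⁻¹ * F) *ᵥ x := by
  rw [eq_inv_mulVec_of_eq_mulVec_add hA h, mulVec_add, mulVec_add, mulVec_mulVec, mulVec_mulVec]

theorem Matrix.eliminate_step {A : Matrix a a α} {D₁ : Matrix a b α} {F D₂ : Matrix a c α}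
    {M : Matrix b a α} (hL : IsUnit (1 - A - D₁ * M)) {x₁ : a → α} {x₀ l₀ : b → α}
    {x₂ φ : c → α} (h₁ : x₁ = F *ᵥ (φ + x₂) + D₁ *ᵥ x₀ + (A *ᵥ x₁ + D₂ *ᵥ x₂))
    (h₀ : x₀ = l₀ + M *ᵥ x₁) :
    x₁ = (1 - A - D₁ * M)⁻¹ *ᵥ (D₁ *ᵥ l₀ + F *ᵥ φ) + ((1 - A - D₁ * M)⁻¹ * (F + D₂)) *ᵥ x₂ := by
  rw [sub_sub] at hL ⊢
  have h : x₁ = (A + D₁ * M) *ᵥ x₁ + ((D₁ *ᵥ l₀ + F *ᵥ φ) + (F + D₂) *ᵥ x₂) := by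
    rw [h₀] at h₁
    nth_rewrite 1 [h₁]
    simp only [mulVec_add, add_mulVec, ← mulVec_mulVec]
    abel
  rw [eq_inv_mulVec_of_eq_mulVec_add hL h, mulVec_add, mulVec_mulVec]

end Elimination

namespace RPosSystem

variable {N : ℕ} {π : ModelParams} {PR : (j : ℕ) → ℕ → ℕ → Fin (N - j + 1) → ℝ}
  {w : ℕ → ℝ} {φ ψ : (j : ℕ) → Fin (N - j + 1) → ℝ}

theorem moment_one (hPR : RPosSystem N π PR)
    (hφ : ∀ j, 1 ≤ j → j ≤ N → HasSum (fun s => w s • PR j s 0) (φ j))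
    (hψ : ∀ j, 1 ≤ j → j ≤ N → HasSum (fun p : ℕ × ℕ => w p.1 • PR j p.1 (p.2 + 1)) (ψ j))
    (hN : 2 ≤ N) :
    ψ 1 = Dm0 N π 1 *ᵥ ψ 1 + Fm N π 1 *ᵥ (φ 2 + ψ 2) := by
  refine (hψ 1 le_rfl (by omega)).unique ?_
  have hterm : (fun p : ℕ × ℕ => w p.1 • PR 1 p.1 (p.2 + 1)) = fun p =>
      Dm0 N π 1 *ᵥ (w p.1 • PR 1 p.1 (p.2 + 1)) + Fm N π 1 *ᵥ (w p.1 • PR 2 p.1 p.2) := by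
    funext p
    conv_lhs => rw [hPR.1]
    simp only [smul_add, mulVec_smul]
  rw [hterm]
  exact ((hψ 1 le_rfl (by omega)).matrix_mulVec _).add
    ((HasSum.add_of_snd_zero_of_snd_succ (f := fun p : ℕ × ℕ => w p.1 • PR 2 p.1 p.2)
      (hφ 2 (by omega) hN) (hψ 2 (by omega) hN)).matrix_mulVec _)

theorem moment_succ (hPR : RPosSystem N π PR)
    (hφ : ∀ j, 1 ≤ j → j ≤ N → HasSum (fun s => w s • PR j s 0) (φ j))
    (hψ : ∀ j, 1 ≤ j → j ≤ N → HasSum (fun p : ℕ × ℕ => w p.1 • PR j p.1 (p.2 + 1)) (ψ j))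
    {j : ℕ} (hj : 1 ≤ j) (hjN : j + 1 ≤ N) :
    ψ (j + 1) = (if j + 1 = N then 0 else Fm N π (j + 1)) *ᵥ (φ (j + 2) + ψ (j + 2))
      + Dm1 N π (j + 1) *ᵥ ψ j
      + ((if j + 1 = N then 0 else Dm0 N π (j + 1)) *ᵥ ψ (j + 1)
        + (if j + 1 = N then 0 else Dm2 N π (j + 1)) *ᵥ ψ (j + 2)) := by
  have hsys := fun s r => hPR.2 j s r hj hjN
  refine (hψ (j + 1) (by omega) hjN).unique ?_
  split_ifs at hsys ⊢ with htop
  · simp only [zero_mulVec, zero_add, add_zero] at hsys ⊢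
    have hterm : (fun p : ℕ × ℕ => w p.1 • PR (j + 1) p.1 (p.2 + 1)) =
        fun p => Dm1 N π (j + 1) *ᵥ (w p.1 • PR j p.1 (p.2 + 1)) := by
      funext p
      rw [hsys, mulVec_smul]
    rw [hterm]
    exact (hψ j hj (by omega)).matrix_mulVec _
  · have hFsum := HasSum.add_of_snd_zero_of_snd_succ
      (f := fun p : ℕ × ℕ => w p.1 • PR (j + 2) p.1 p.2)
      (hφ (j + 2) (by omega) (by omega)) (hψ (j + 2) (by omega) (by omega))
    have hterm : (fun p : ℕ × ℕ => w p.1 • PR (j + 1) p.1 (p.2 + 1)) = fun p =>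
        Fm N π (j + 1) *ᵥ (w p.1 • PR (j + 2) p.1 p.2)
          + Dm1 N π (j + 1) *ᵥ (w p.1 • PR j p.1 (p.2 + 1))
          + (Dm0 N π (j + 1) *ᵥ (w p.1 • PR (j + 1) p.1 (p.2 + 1))
            + Dm2 N π (j + 1) *ᵥ (w p.1 • PR (j + 2) p.1 (p.2 + 1))) := by
      funext p
      conv_lhs => rw [hsys]
      simp only [smul_add, mulVec_smul]
    rw [hterm]
    exact ((hFsum.matrix_mulVec _).add ((hψ j hj (by omega)).matrix_mulVec _)).add
      (((hψ (j + 1) (by omega) hjN).matrix_mulVec _).add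
        ((hψ (j + 2) (by omega) (by omega)).matrix_mulVec _))

end RPosSystem

theorem rPos_sMoments_general
    (N : ℕ) (hN : 2 ≤ N) (π : ModelParams)
    (PR : (j : ℕ) → ℕ → ℕ → Fin (N - j + 1) → ℝ)
    (hPRr : RPosSystem N π PR)
    (n : ℕ)
    (φR : ℕ → (j : ℕ) → Fin (N - j + 1) → ℝ)
    (hφR : ∀ k : ℕ, k ≤ n → ∀ j : ℕ, 1 ≤ j → j ≤ N → ∀ i : Fin (N - j + 1),
      HasSum (fun s : ℕ => ((s.descFactorial k : ℕ) : ℝ) * PR j s 0 i) (φR k j i))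
    (ψ : ℕ → (j : ℕ) → Fin (N - j + 1) → ℝ)
    (hψ : ∀ k : ℕ, k ≤ n → ∀ j : ℕ, 1 ≤ j → j ≤ N → ∀ i : Fin (N - j + 1),
      HasSum (fun p : ℕ × ℕ => ((p.1.descFactorial k : ℕ) : ℝ) * PR j p.1 (p.2 + 1) i)
        (ψ k j i))
    (L : (j : ℕ) → Matrix (Fin (N - j + 1)) (Fin (N - j + 1)) ℝ)
    (hL1 : L 1 = 1 - Dm0 N π 1)
    (hLrec : ∀ j : ℕ, 1 ≤ j → j + 1 ≤ N →
      L (j + 1) = 1 - (if j + 1 = N then 0 else Dm0 N π (j + 1))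
        - (show Matrix (Fin (N - (j + 1) + 1)) (Fin (N - j + 1)) ℝ from Dm1 N π (j + 1))
            * (L j)⁻¹ * (Fm N π j + (if j + 1 = 2 then 0 else Dm2 N π j)))
    (hLinv : ∀ j : ℕ, 1 ≤ j → j ≤ N → IsUnit (L j))
    (l : (j : ℕ) → Fin (N - j + 1) → ℝ)
    (hl1 : l 1 = (L 1)⁻¹.mulVec
      (if 1 = N then 0 else (Fm N π 1).mulVec (φR n 2)))
    (hlrec : ∀ j : ℕ, 1 ≤ j → j + 1 ≤ N →
      l (j + 1) = (L (j + 1))⁻¹.mulVec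
        ((Dm1 N π (j + 1)).mulVec (l j)
          + (if j + 1 = N then 0 else (Fm N π (j + 1)).mulVec (φR n (j + 2))))) :
    ∀ j : ℕ, 1 ≤ j → j ≤ N →
      ψ n j = l j
        + (if j = N then 0 else
            ((L j)⁻¹ * (Fm N π j + (if j = 1 then 0 else Dm2 N π j))).mulVec
              (ψ n (j + 1))) := by
  have hφ j hj hjN : HasSum (fun s => (s.descFactorial n : ℝ) • PR j s 0) (φR n j) :=
    Pi.hasSum.2 (hφR n le_rfl j hj hjN)
  have hψv j hj hjN :
      HasSum (fun p : ℕ × ℕ => (p.1.descFactorial n : ℝ) • PR j p.1 (p.2 + 1)) (ψ n j) :=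
    Pi.hasSum.2 (hψ n le_rfl j hj hjN)
  intro j hj
  induction j, hj using Nat.le_induction with
  | base =>
    intro _
    rw [hl1, hL1, if_neg (by omega), if_neg (by omega), if_pos rfl, add_zero]
    exact Matrix.eliminate_first (hL1 ▸ hLinv 1 le_rfl (by omega)) (hPRr.moment_one hφ hψv hN)
  | succ j hj ih =>
    intro hjN
    have hprev := ih (by omega)
    rw [if_neg (by omega)] at hprev
    have hL := hLrec j hj hjN
    simp only [Nat.reduceEqDiff, Matrix.mul_assoc] at hL
    have helim := Matrix.eliminate_step (hL ▸ hLinv (j + 1) (by omega) hjN)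
      (hPRr.moment_succ hφ hψv hj hjN) hprev
    rw [hlrec j hj hjN, hL, if_neg (by omega : ¬ j + 1 = 1)]
    refine helim.trans ?_
    split_ifs <;> simp

/-- **Corollary 2(ii) of the paper.** Recursive computation of the
factorial moments `ψ⁽ⁿ⁾_j = Σ_{s≥0} Σ_{r≥1} s(s−1)⋯(s−n+1) P_{j,1_R}(s,r)`:
for `1 ≤ j ≤ N`,
`ψ⁽ⁿ⁾_j = l⁽ⁿ⁾_j + (1−δ_{j,N}) L_j⁻¹ (F_j + (1−δ_{j,1}) D_{j+1}(2)) ψ⁽ⁿ⁾_{j+1}`. -/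
theorem rPos_sMoments
    (N : ℕ) (hN : 2 ≤ N) (π : ModelParams) (hπ : π.Valid)
    (P : (j : ℕ) → ℕ → Fin (N - j) → ℝ)
    (hP : OneSSystem N π P)
    (PR : (j : ℕ) → ℕ → ℕ → Fin (N - j + 1) → ℝ)
    (hPR0 : RZeroSystem N π P (fun j s => PR j s 0))
    (hPRr : RPosSystem N π PR)
    (hPnn : ∀ j : ℕ, j ≤ N - 1 → ∀ (s : ℕ) (i : Fin (N - j)), 0 ≤ P j s i)
    (hPRnn : ∀ j : ℕ, 1 ≤ j → j ≤ N → ∀ (s r : ℕ) (i : Fin (N - j + 1)), 0 ≤ PR j s r i)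
    (n : ℕ)
    (φR : ℕ → (j : ℕ) → Fin (N - j + 1) → ℝ)
    (hφR : ∀ k : ℕ, k ≤ n → ∀ j : ℕ, 1 ≤ j → j ≤ N → ∀ i : Fin (N - j + 1),
      HasSum (fun s : ℕ => ((s.descFactorial k : ℕ) : ℝ) * PR j s 0 i) (φR k j i))
    (ψ : ℕ → (j : ℕ) → Fin (N - j + 1) → ℝ)
    (hψ : ∀ k : ℕ, k ≤ n → ∀ j : ℕ, 1 ≤ j → j ≤ N → ∀ i : Fin (N - j + 1),
      HasSum (fun p : ℕ × ℕ => ((p.1.descFactorial k : ℕ) : ℝ) * PR j p.1 (p.2 + 1) i)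
        (ψ k j i))
    (L : (j : ℕ) → Matrix (Fin (N - j + 1)) (Fin (N - j + 1)) ℝ)
    (hL1 : L 1 = 1 - Dm0 N π 1)
    (hLrec : ∀ j : ℕ, 1 ≤ j → j + 1 ≤ N →
      L (j + 1) = 1 - (if j + 1 = N then 0 else Dm0 N π (j + 1))
        - (show Matrix (Fin (N - (j + 1) + 1)) (Fin (N - j + 1)) ℝ from Dm1 N π (j + 1))
            * (L j)⁻¹ * (Fm N π j + (if j + 1 = 2 then 0 else Dm2 N π j)))
    (hLinv : ∀ j : ℕ, 1 ≤ j → j ≤ N → IsUnit (L j))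
    (l : (j : ℕ) → Fin (N - j + 1) → ℝ)
    (hl1 : l 1 = (L 1)⁻¹.mulVec
      (if 1 = N then 0 else (Fm N π 1).mulVec (φR n 2)))
    (hlrec : ∀ j : ℕ, 1 ≤ j → j + 1 ≤ N →
      l (j + 1) = (L (j + 1))⁻¹.mulVec
        ((Dm1 N π (j + 1)).mulVec (l j)
          + (if j + 1 = N then 0 else (Fm N π (j + 1)).mulVec (φR n (j + 2))))) :
    ∀ j : ℕ, 1 ≤ j → j ≤ N →
      ψ n j = l j
        + (if j = N then 0 else
            ((L j)⁻¹ * (Fm N π j + (if j = 1 then 0 else Dm2 N π j))).mulVec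
              (ψ n (j + 1))) :=
  rPos_sMoments_general N hN π PR hPRr n φR hφR ψ hψ L hL1 hLrec hLinv l hl1 hlrec
end
end

section
/- Let {PR_j(s,0)} satisfy the (·,0)-system (coupled with a 1S family) and {PR_j(s,r)}_{r≥1} satisfy the (·,r)-system, all with nonnegative entries. Fix m' ≥ 1 and assume that for each 0 ≤ k ≤ m' the vectors χ^{(k)}_j := Σ_{s≥0} Σ_{r≥1} r(r−1)⋯(r−k+1)·PR_j(s,r) and φR^{(0)}_j := Σ_{s≥0} PR_j(s,0) converge entrywise for 1 ≤ j ≤ N. Define L_1 = I_N − D_1(0) and, for 2 ≤ j ≤ N, L_j = I_{N−j+1} − (1−δ_{j,N})D_j(0) − D_{j−1}(1)·L_{j−1}^{−1}·(F_{j−1} + (1−δ_{j,2})D_j(2)); assume each L_j is invertible. Then for 1 ≤ j ≤ N: χ^{(m')}_j = l^{(m')}_j + (1−δ_{j,N})·L_j^{−1}·(F_j + (1−δ_{j,1})D_{j+1}(2))·χ^{(m')}_{j+1}, where l^{(m')}_1 = L_1^{−1}·(1−δ_{1,N})·F_1·(δ_{m',1}·φR^{(0)}_2 + m'·χ^{(m'−1)}_2)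 and, for 2 ≤ j ≤ N, l^{(m')}_j = L_j^{−1}·(D_{j−1}(1)·l^{(m')}_{j−1} + (1−δ_{j,N})·F_j·(δ_{m',1}·φR^{(0)}_{j+1} + m'·χ^{(m'−1)}_{j+1})). -/
open Matrix

noncomputable section

private lemma descFac_succ_left (n k : ℕ) :
    (n + 1).descFactorial (k + 1) = n.descFactorial (k + 1) + (k + 1) * n.descFactorial k := by
  rcases le_or_gt k n with h | h
  · rw [Nat.succ_descFactorial_succ, Nat.descFactorial_succ, ← Nat.add_mul]
    congr 1
    omega
  · rw [Nat.descFactorial_of_lt (by omega), Nat.descFactorial_of_lt (by omega),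
      Nat.descFactorial_of_lt (by omega)]
    simp

private lemma hasSum_shift {f : ℕ × ℕ → ℝ} {a : ℝ} (h0 : ∀ s, f (s, 0) = 0)
    (h : HasSum (fun p : ℕ × ℕ => f (p.1, p.2 + 1)) a) : HasSum f a := by
  have hinj : Function.Injective (fun p : ℕ × ℕ => ((p.1, p.2 + 1) : ℕ × ℕ)) := by
    intro p q hpq
    simpa [Prod.ext_iff] using hpq
  refine (Function.Injective.hasSum_iff hinj ?_).mp h
  rintro ⟨s, r⟩ hx
  rcases r with _ | r
  · exact h0 s
  · exact absurd ⟨(s, r), rfl⟩ hx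

private lemma hasSum_split {f : ℕ × ℕ → ℝ} {a b : ℝ}
    (h0 : HasSum (fun s => f (s, 0)) a)
    (h1 : HasSum (fun p : ℕ × ℕ => f (p.1, p.2 + 1)) b) : HasSum f (a + b) := by
  have hA : HasSum (fun p : ℕ × ℕ => if p.2 = 0 then f (p.1, 0) else 0) a := by
    have hinj : Function.Injective (fun s : ℕ => ((s, 0) : ℕ × ℕ)) := by
      intro s t h
      simpa using congrArg Prod.fst h
    refine (Function.Injective.hasSum_iff hinj ?_).mp (by simpa [Function.comp_def] using h0)
    rintro ⟨s, r⟩ hx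
    rcases r with _ | r
    · exact absurd ⟨s, rfl⟩ hx
    · simp
  have hB : HasSum (fun p : ℕ × ℕ => if p.2 = 0 then 0 else f p) b := by
    apply hasSum_shift (f := fun p : ℕ × ℕ => if p.2 = 0 then 0 else f p)
    · intro s; simp
    · simpa using h1
  have hfe : f = fun p : ℕ × ℕ =>
      (if p.2 = 0 then f (p.1, 0) else 0) + (if p.2 = 0 then 0 else f p) := by
    funext p
    rcases p with ⟨s, r⟩
    rcases r with _ | r <;> simp
  rw [hfe]
  exact hA.add hB

private lemma hasSum_mulVec {n m : ℕ} (A : Matrix (Fin n) (Fin m) ℝ)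
    {v : ℕ × ℕ → Fin m → ℝ} {w : Fin m → ℝ}
    (hv : ∀ l, HasSum (fun p => v p l) (w l)) (k : Fin n) :
    HasSum (fun p => A.mulVec (v p) k) (A.mulVec w k) := by
  simp only [Matrix.mulVec, dotProduct]
  exact hasSum_sum fun l _ => (hv l).mul_left (A k l)
/-- **Corollary 3 of the paper.** Recursive computation of the factorial
moments `χ⁽ᵐ⁾_j = Σ_{s≥0} Σ_{r≥1} r(r−1)⋯(r−m+1) P_{j,1_R}(s,r)` (here `m' = mo ≥ 1`):
for `1 ≤ j ≤ N`,
`χ⁽ᵐ⁾_j = l⁽ᵐ⁾_j + (1−δ_{j,N}) L_j⁻¹ (F_j + (1−δ_{j,1}) D_{j+1}(2)) χ⁽ᵐ⁾_{j+1}`,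
where the `l⁽ᵐ⁾_j` are built from `δ_{m,1} φR⁽⁰⁾_{j+1} + m χ⁽ᵐ⁻¹⁾_{j+1}`. -/
theorem rPos_rMoments
    (N : ℕ) (hN : 2 ≤ N) (π : ModelParams) (hπ : π.Valid)
    (P : (j : ℕ) → ℕ → Fin (N - j) → ℝ)
    (hP : OneSSystem N π P)
    (PR : (j : ℕ) → ℕ → ℕ → Fin (N - j + 1) → ℝ)
    (hPR0 : RZeroSystem N π P (fun j s => PR j s 0))
    (hPRr : RPosSystem N π PR)
    (hPnn : ∀ j : ℕ, j ≤ N - 1 → ∀ (s : ℕ) (i : Fin (N - j)), 0 ≤ P j s i)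
    (hPRnn : ∀ j : ℕ, 1 ≤ j → j ≤ N → ∀ (s r : ℕ) (i : Fin (N - j + 1)), 0 ≤ PR j s r i)
    (mo : ℕ) (hmo : 1 ≤ mo)
    (φR0 : (j : ℕ) → Fin (N - j + 1) → ℝ)
    (hφR0 : ∀ j : ℕ, 1 ≤ j → j ≤ N → ∀ i : Fin (N - j + 1),
      HasSum (fun s : ℕ => PR j s 0 i) (φR0 j i))
    (χ : ℕ → (j : ℕ) → Fin (N - j + 1) → ℝ)
    (hχ : ∀ k : ℕ, k ≤ mo → ∀ j : ℕ, 1 ≤ j → j ≤ N → ∀ i : Fin (N - j + 1),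
      HasSum
        (fun p : ℕ × ℕ => (((p.2 + 1).descFactorial k : ℕ) : ℝ) * PR j p.1 (p.2 + 1) i)
        (χ k j i))
    (L : (j : ℕ) → Matrix (Fin (N - j + 1)) (Fin (N - j + 1)) ℝ)
    (hL1 : L 1 = 1 - Dm0 N π 1)
    (hLrec : ∀ j : ℕ, 1 ≤ j → j + 1 ≤ N →
      L (j + 1) = 1 - (if j + 1 = N then 0 else Dm0 N π (j + 1))
        - (show Matrix (Fin (N - (j + 1) + 1)) (Fin (N - j + 1)) ℝ from Dm1 N π (j + 1))
            * (L j)⁻¹ * (Fm N π j + (if j + 1 = 2 then 0 else Dm2 N π j)))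
    (hLinv : ∀ j : ℕ, 1 ≤ j → j ≤ N → IsUnit (L j))
    (l : (j : ℕ) → Fin (N - j + 1) → ℝ)
    (hl1 : l 1 = (L 1)⁻¹.mulVec
      (if 1 = N then 0 else (Fm N π 1).mulVec
        ((if mo = 1 then φR0 2 else 0) + (mo : ℝ) • χ (mo - 1) 2)))
    (hlrec : ∀ j : ℕ, 1 ≤ j → j + 1 ≤ N →
      l (j + 1) = (L (j + 1))⁻¹.mulVec
        ((Dm1 N π (j + 1)).mulVec (l j)
          + (if j + 1 = N then 0 else (Fm N π (j + 1)).mulVec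
              ((if mo = 1 then φR0 (j + 2) else 0) + (mo : ℝ) • χ (mo - 1) (j + 2))))) :
    ∀ j : ℕ, 1 ≤ j → j ≤ N →
      χ mo j = l j
        + (if j = N then 0 else
            ((L j)⁻¹ * (Fm N π j + (if j = 1 then 0 else Dm2 N π j))).mulVec
              (χ mo (j + 1))) := by
  classical
  obtain ⟨hPRr1, hPRrS⟩ := hPRr
  have hNpos : 1 ≤ N := by omega
  -- Key summation lemma
  have hkey : ∀ j, 1 ≤ j → j ≤ N → ∀ i : Fin (N - j + 1),
      HasSum (fun p : ℕ × ℕ => (((p.2 + 1).descFactorial mo : ℕ) : ℝ) * PR j p.1 p.2 i)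
        (χ mo j i + ((if mo = 1 then φR0 j else 0) + (mo : ℝ) • χ (mo - 1) j) i) := by
    intro j hj1 hjN i
    have hgv : ((if mo = 1 then φR0 j else 0) + (mo : ℝ) • χ (mo - 1) j) i
        = (if mo = 1 then φR0 j i else 0) + (mo : ℝ) * χ (mo - 1) j i := by
      by_cases h : mo = 1 <;> simp [h]
    rw [hgv]
    obtain ⟨m', rfl⟩ : ∃ m', mo = m' + 1 := ⟨mo - 1, by omega⟩
    have h1 : HasSum (fun p : ℕ × ℕ => ((p.2.descFactorial (m' + 1) : ℕ) : ℝ) * PR j p.1 p.2 i)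
        (χ (m' + 1) j i) := by
      apply hasSum_shift
      · intro s; simp
      · exact hχ (m' + 1) le_rfl j hj1 hjN i
    have h2 : HasSum (fun p : ℕ × ℕ =>
          ((m' + 1 : ℕ) : ℝ) * (((p.2.descFactorial m' : ℕ) : ℝ) * PR j p.1 p.2 i))
        ((if m' + 1 = 1 then φR0 j i else 0) + ((m' + 1 : ℕ) : ℝ) * χ (m' + 1 - 1) j i) := by
      rcases m' with _ | k
      · have hs : HasSum (fun p : ℕ × ℕ => PR j p.1 p.2 i) (φR0 j i + χ 0 j i) := by
          refine hasSum_split (hφR0 j hj1 hjN i) ?_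
          simpa using hχ 0 (by omega) j hj1 hjN i
        simpa using hs
      · have hs : HasSum
            (fun p : ℕ × ℕ => ((p.2.descFactorial (k + 1) : ℕ) : ℝ) * PR j p.1 p.2 i)
            (χ (k + 1) j i) := by
          apply hasSum_shift
          · intro s; simp
          · exact hχ (k + 1) (by omega) j hj1 hjN i
        have := hs.mul_left ((k + 1 + 1 : ℕ) : ℝ)
        simpa [mul_assoc] using this
    have heq : (fun p : ℕ × ℕ => (((p.2 + 1).descFactorial (m' + 1) : ℕ) : ℝ) * PR j p.1 p.2 i)
        = fun p : ℕ × ℕ => ((p.2.descFactorial (m' + 1) : ℕ) : ℝ) * PR j p.1 p.2 i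
            + ((m' + 1 : ℕ) : ℝ) * (((p.2.descFactorial m' : ℕ) : ℝ) * PR j p.1 p.2 i) := by
      funext p
      rw [descFac_succ_left]
      push_cast
      ring
    rw [heq]
    exact h1.add h2
  -- Summed equation at level 1
  have eqA : χ mo 1 = (Dm0 N π 1).mulVec (χ mo 1)
      + (Fm N π 1).mulVec (χ mo 2
          + ((if mo = 1 then φR0 2 else 0) + (mo : ℝ) • χ (mo - 1) 2)) := by
    funext i
    have hLHS := hχ mo le_rfl 1 le_rfl hNpos i
    have hA := hasSum_mulVec (Dm0 N π 1)
      (v := fun p : ℕ × ℕ => (((p.2 + 1).descFactorial mo : ℕ) : ℝ) • PR 1 p.1 (p.2 + 1))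
      (w := χ mo 1) (fun l => by simpa using hχ mo le_rfl 1 le_rfl hNpos l) i
    have hB := hasSum_mulVec (Fm N π 1)
      (v := fun p : ℕ × ℕ => (((p.2 + 1).descFactorial mo : ℕ) : ℝ) • PR 2 p.1 p.2)
      (w := χ mo 2 + ((if mo = 1 then φR0 2 else 0) + (mo : ℝ) • χ (mo - 1) 2))
      (fun l => by simpa using hkey 2 (by omega) hN l) i
    have hRHS := hA.add hB
    have heq : (fun p : ℕ × ℕ =>
        (Dm0 N π 1).mulVec ((((p.2 + 1).descFactorial mo : ℕ) : ℝ) • PR 1 p.1 (p.2 + 1)) i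
          + (Fm N π 1).mulVec ((((p.2 + 1).descFactorial mo : ℕ) : ℝ) • PR 2 p.1 p.2) i)
        = fun p : ℕ × ℕ => (((p.2 + 1).descFactorial mo : ℕ) : ℝ) * PR 1 p.1 (p.2 + 1) i := by
      funext p
      have h := congrFun (hPRr1 p.1 p.2) i
      rw [Pi.add_apply] at h
      rw [Matrix.mulVec_smul, Matrix.mulVec_smul, Pi.smul_apply, Pi.smul_apply,
        smul_eq_mul, smul_eq_mul, ← mul_add, ← h]
    rw [heq] at hRHS
    rw [Pi.add_apply]
    exact hLHS.unique hRHS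
  -- Summed equation at levels 2..N
  have eqB : ∀ j, 1 ≤ j → j + 1 ≤ N →
      χ mo (j + 1)
        = (if j + 1 = N then 0 else
            (Fm N π (j + 1)).mulVec (χ mo (j + 2)
              + ((if mo = 1 then φR0 (j + 2) else 0) + (mo : ℝ) • χ (mo - 1) (j + 2))))
          + (Dm1 N π (j + 1)).mulVec (χ mo j)
          + (if j + 1 = N then 0 else
              (Dm0 N π (j + 1)).mulVec (χ mo (j + 1))
                + (Dm2 N π (j + 1)).mulVec (χ mo (j + 2))) := by
    intro j hj1 hjN
    by_cases hcase : j + 1 = N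
    · simp only [if_pos hcase]
      rw [zero_add, add_zero]
      funext i
      have hLHS := hχ mo le_rfl (j + 1) (by omega) (by omega) i
      have hA := hasSum_mulVec (Dm1 N π (j + 1))
        (v := fun p : ℕ × ℕ => (((p.2 + 1).descFactorial mo : ℕ) : ℝ) • PR j p.1 (p.2 + 1))
        (w := χ mo j) (fun l => by simpa using hχ mo le_rfl j hj1 (by omega) l) i
      have heq : (fun p : ℕ × ℕ =>
          (Dm1 N π (j + 1)).mulVec
            ((((p.2 + 1).descFactorial mo : ℕ) : ℝ) • PR j p.1 (p.2 + 1)) i)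
          = fun p : ℕ × ℕ => (((p.2 + 1).descFactorial mo : ℕ) : ℝ) * PR (j + 1) p.1 (p.2 + 1) i := by
        funext p
        have h := congrFun (hPRrS j p.1 p.2 hj1 hjN) i
        rw [if_pos hcase, if_pos hcase] at h
        simp only [Pi.add_apply, Pi.zero_apply, zero_add, add_zero] at h
        rw [Matrix.mulVec_smul, Pi.smul_apply, smul_eq_mul, ← h]
      rw [heq] at hA
      exact hLHS.unique hA
    · simp only [if_neg hcase]
      funext i
      have hLHS := hχ mo le_rfl (j + 1) (by omega) (by omega) i
      have hF := hasSum_mulVec (Fm N π (j + 1))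
        (v := fun p : ℕ × ℕ => (((p.2 + 1).descFactorial mo : ℕ) : ℝ) • PR (j + 2) p.1 p.2)
        (w := χ mo (j + 2)
          + ((if mo = 1 then φR0 (j + 2) else 0) + (mo : ℝ) • χ (mo - 1) (j + 2)))
        (fun l => by simpa using hkey (j + 2) (by omega) (by omega) l) i
      have hD1 := hasSum_mulVec (Dm1 N π (j + 1))
        (v := fun p : ℕ × ℕ => (((p.2 + 1).descFactorial mo : ℕ) : ℝ) • PR j p.1 (p.2 + 1))
        (w := χ mo j) (fun l => by simpa using hχ mo le_rfl j hj1 (by omega) l) i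
      have hD0 := hasSum_mulVec (Dm0 N π (j + 1))
        (v := fun p : ℕ × ℕ => (((p.2 + 1).descFactorial mo : ℕ) : ℝ) • PR (j + 1) p.1 (p.2 + 1))
        (w := χ mo (j + 1)) (fun l => by simpa using hχ mo le_rfl (j + 1) (by omega) (by omega) l) i
      have hD2 := hasSum_mulVec (Dm2 N π (j + 1))
        (v := fun p : ℕ × ℕ => (((p.2 + 1).descFactorial mo : ℕ) : ℝ) • PR (j + 2) p.1 (p.2 + 1))
        (w := χ mo (j + 2)) (fun l => by simpa using hχ mo le_rfl (j + 2) (by omega) (by omega) l) i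
      have hRHS := (hF.add hD1).add (hD0.add hD2)
      have heq : (fun p : ℕ × ℕ =>
          ((Fm N π (j + 1)).mulVec
              ((((p.2 + 1).descFactorial mo : ℕ) : ℝ) • PR (j + 2) p.1 p.2) i
            + (Dm1 N π (j + 1)).mulVec
              ((((p.2 + 1).descFactorial mo : ℕ) : ℝ) • PR j p.1 (p.2 + 1)) i)
            + ((Dm0 N π (j + 1)).mulVec
                ((((p.2 + 1).descFactorial mo : ℕ) : ℝ) • PR (j + 1) p.1 (p.2 + 1)) i
              + (Dm2 N π (j + 1)).mulVec
                ((((p.2 + 1).descFactorial mo : ℕ) : ℝ) • PR (j + 2) p.1 (p.2 + 1)) i))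
          = fun p : ℕ × ℕ =>
              (((p.2 + 1).descFactorial mo : ℕ) : ℝ) * PR (j + 1) p.1 (p.2 + 1) i := by
        funext p
        have h := congrFun (hPRrS j p.1 p.2 hj1 hjN) i
        rw [if_neg hcase, if_neg hcase] at h
        simp only [Pi.add_apply] at h
        rw [Matrix.mulVec_smul, Matrix.mulVec_smul, Matrix.mulVec_smul, Matrix.mulVec_smul,
          Pi.smul_apply, Pi.smul_apply, Pi.smul_apply, Pi.smul_apply,
          smul_eq_mul, smul_eq_mul, smul_eq_mul, smul_eq_mul, h]
        ring
      rw [heq] at hRHS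
      simp only [Pi.add_apply]
      exact hLHS.unique hRHS
  -- inverse cancellation
  have hLmul : ∀ j, 1 ≤ j → j ≤ N → ∀ v : Fin (N - j + 1) → ℝ,
      (L j)⁻¹.mulVec ((L j).mulVec v) = v := by
    intro j hj1 hjN v
    rw [Matrix.mulVec_mulVec,
      Matrix.nonsing_inv_mul _ ((Matrix.isUnit_iff_isUnit_det _).mp (hLinv j hj1 hjN)),
      Matrix.one_mulVec]
  -- Main induction
  intro j hj1
  induction j, hj1 using Nat.le_induction with
  | base =>
    intro hjN
    show χ mo 1 = l 1 + (if 1 = N then 0 else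
        ((L 1)⁻¹ * (Fm N π 1 + if 1 = 1 then 0 else Dm2 N π 1)).mulVec (χ mo 2))
    have h1 : (L 1).mulVec (χ mo 1)
        = (Fm N π 1).mulVec ((if mo = 1 then φR0 2 else 0) + (mo : ℝ) • χ (mo - 1) 2)
          + (Fm N π 1).mulVec (χ mo 2) := by
      rw [hL1, Matrix.sub_mulVec, Matrix.one_mulVec]
      nth_rewrite 1 [eqA]
      rw [Matrix.mulVec_add]
      abel
    have h2 := congrArg (L 1)⁻¹.mulVec h1
    rw [hLmul 1 le_rfl hjN] at h2
    rw [hl1, if_neg (show (1 : ℕ) ≠ N by omega), if_neg (show (1 : ℕ) ≠ N by omega),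
      if_pos rfl, add_zero, ← Matrix.mulVec_mulVec, ← Matrix.mulVec_add]
    exact h2
  | succ j hj ih =>
    intro hjN1
    show χ mo (j + 1) = l (j + 1) + (if j + 1 = N then 0 else
        ((L (j + 1))⁻¹ * (Fm N π (j + 1) + if j + 1 = 1 then 0 else Dm2 N π (j + 1))).mulVec
          (χ mo (j + 2)))
    have hjN : j ≤ N := by omega
    have hSj := ih hjN
    rw [if_neg (show j ≠ N by omega)] at hSj
    have hifL : (if j + 1 = 2 then (0 : Matrix (Fin (N - j + 1)) (Fin (N - (j + 1) + 1)) ℝ)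
          else Dm2 N π j)
        = (if j = 1 then 0 else Dm2 N π j) := by
      rcases eq_or_ne j 1 with h | h
      · simp [h]
      · rw [if_neg (by omega), if_neg h]
    have hLrecj := hLrec j hj hjN1
    rw [hifL] at hLrecj
    have hX : ((L j)⁻¹ * (Fm N π j + if j = 1 then 0 else Dm2 N π j)).mulVec (χ mo (j + 1))
        = χ mo j - l j := by
      rw [hSj]; abel
    have hkey2 : (L (j + 1)).mulVec (χ mo (j + 1))
        = (Dm1 N π (j + 1)).mulVec (l j)
          + (if j + 1 = N then 0 else
              (Fm N π (j + 1)).mulVec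
                  ((if mo = 1 then φR0 (j + 2) else 0) + (mo : ℝ) • χ (mo - 1) (j + 2))
                + (Fm N π (j + 1) + Dm2 N π (j + 1)).mulVec (χ mo (j + 2))) := by
      rw [hLrecj, Matrix.sub_mulVec, Matrix.sub_mulVec, Matrix.one_mulVec,
        Matrix.mul_assoc, ← Matrix.mulVec_mulVec, hX, Matrix.mulVec_sub]
      by_cases hc : j + 1 = N
      · simp only [if_pos hc]
        rw [Matrix.zero_mulVec, sub_zero]
        nth_rewrite 1 [eqB j hj hjN1]
        simp only [if_pos hc]
        abel
      · simp only [if_neg hc]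
        nth_rewrite 1 [eqB j hj hjN1]
        simp only [if_neg hc]
        rw [Matrix.mulVec_add, Matrix.add_mulVec]
        abel
    have h2 := congrArg (L (j + 1))⁻¹.mulVec hkey2
    rw [hLmul (j + 1) (by omega) hjN1] at h2
    rw [hlrec j hj hjN1]
    by_cases hc : j + 1 = N
    · simp only [if_pos hc] at h2 ⊢
      rw [add_zero]
      exact h2
    · simp only [if_neg hc, if_neg (show j + 1 ≠ 1 by omega)] at h2 ⊢
      rw [← Matrix.mulVec_mulVec, ← Matrix.mulVec_add, add_assoc]
      exact h2
end
end
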